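/- arXiv:2105.12910 — 8 statements merged into one kernel-verified Lean document; each statement's English description precedes it below -/
import Mathlib

section
/- Let n ≥ 2, m_* < m < 1, let a ∈ ℝⁿ be a nonzero vector, and set φ(y) := A·(|a|·|y| + a·y)^{−1/(1−m)} for y ∈ ℝⁿ \ {−τ a/|a| : τ ≥ 0}. Then on this set φ is smooth and satisfies Δ(φᵐ)(y) = −a·∇φ(y) = (A/(1−m))·(|a|/|y|)·(|a|·|y| + a·y)^{−1/(1−m)} ≥ 0; in particular φ is a stationary solution of the equation ∂ₜv = Δ(vᵐ) + a·∇v, i.e. Δ(φᵐ)(y) + a·∇φ(y) = 0. -/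
open scoped RealInnerProductSpace
open Set

/-- The Laplacian of `f : ℝⁿ → ℝ`: the sum of the second derivatives along the
standard orthonormal coordinate directions. -/
noncomputable def lap {n : ℕ} (f : EuclideanSpace ℝ (Fin n) → ℝ)
    (x : EuclideanSpace ℝ (Fin n)) : ℝ :=
  ∑ i : Fin n, iteratedFDeriv ℝ 2 f x ![EuclideanSpace.single i 1, EuclideanSpace.single i 1]

/-- `m_* = 0` if `n = 2` and `(n-3)/(n-1)` if `n ≥ 3`. -/
noncomputable def mstar (n : ℕ) : ℝ := if n = 2 then 0 else ((n : ℝ) - 3) / ((n : ℝ) - 1)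

section aux
variable {E : Type*} [NormedAddCommGroup E] [InnerProductSpace ℝ E]

noncomputable def innerSL' (E : Type*) [NormedAddCommGroup E] [InnerProductSpace ℝ E] :
    E →L[ℝ] E →L[ℝ] ℝ := innerSL ℝ

theorem norm_hasFDerivAt' {y : E} (hy : y ≠ 0) :
    HasFDerivAt (fun z : E => ‖z‖) (‖y‖⁻¹ • innerSL ℝ y) y := by
  have h1 : HasFDerivAt (fun z : E => ⟪z, z⟫)
      ((fderivInnerCLM ℝ (y, y)).comp ((ContinuousLinearMap.id ℝ E).prod (ContinuousLinearMap.id ℝ E))) y :=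
    (hasFDerivAt_id y).inner ℝ (hasFDerivAt_id y)
  have h2 : HasDerivAt Real.sqrt (1 / (2 * Real.sqrt ⟪y, y⟫)) ⟪y, y⟫ := by
    apply Real.hasDerivAt_sqrt
    simpa [real_inner_self_eq_norm_sq] using pow_ne_zero 2 (norm_ne_zero_iff.mpr hy)
  have h3 : HasFDerivAt (fun z : E => Real.sqrt ⟪z, z⟫)
      ((1 / (2 * Real.sqrt ⟪y, y⟫)) • ((fderivInnerCLM ℝ (y, y)).comp
        ((ContinuousLinearMap.id ℝ E).prod (ContinuousLinearMap.id ℝ E)))) y :=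
    h2.comp_hasFDerivAt (f := fun z : E => ⟪z, z⟫) y h1
  have h4 : (fun z : E => Real.sqrt ⟪z, z⟫) = fun z : E => ‖z‖ := by
    funext z; rw [real_inner_self_eq_norm_sq]; exact Real.sqrt_sq (norm_nonneg z)
  rw [h4] at h3
  refine HasFDerivAt.congr_fderiv h3 ?_
  ext v
  have hR : ‖y‖ ≠ 0 := norm_ne_zero_iff.mpr hy
  simp [real_inner_self_eq_norm_sq, Real.sqrt_sq (norm_nonneg y), real_inner_comm y v]
  field_simp
  ring

theorem u_hasFDerivAt (a : E) {y : E} (hy : y ≠ 0) :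
    HasFDerivAt (fun z : E => ‖a‖ * ‖z‖ + ⟪a, z⟫)
      ((‖a‖ * ‖y‖⁻¹) • innerSL ℝ y + innerSL ℝ a) y := by
  have h1 := (norm_hasFDerivAt' hy).const_mul ‖a‖
  have h2 : HasFDerivAt (fun z : E => ⟪a, z⟫) (innerSL ℝ a) y := (innerSL ℝ a).hasFDerivAt
  have h3 := h1.add h2
  refine HasFDerivAt.congr_fderiv h3 ?_
  rw [smul_smul]

set_option maxHeartbeats 600000 in
theorem pow_hasFDerivAt (a : E) {y : E} (hy : y ≠ 0)
    (hU : ‖a‖ * ‖y‖ + ⟪a, y⟫ ≠ 0) (c r : ℝ) :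
    HasFDerivAt (fun z : E => c * (‖a‖ * ‖z‖ + ⟪a, z⟫) ^ r)
      ((c * r * (‖a‖ * ‖y‖ + ⟪a, y⟫) ^ (r - 1) * (‖a‖ * ‖y‖⁻¹)) • innerSL ℝ y
        + (c * r * (‖a‖ * ‖y‖ + ⟪a, y⟫) ^ (r - 1)) • innerSL ℝ a) y := by
  have h1 := ((u_hasFDerivAt a hy).rpow_const (p := r) (Or.inl hU)).const_mul c
  refine HasFDerivAt.congr_fderiv h1 ?_
  ext v
  simp [mul_add, smul_smul]
  ring

set_option maxHeartbeats 1000000 in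
theorem G_hasFDerivAt (a : E) {y : E} (hy : y ≠ 0)
    (hU : 0 < ‖a‖ * ‖y‖ + ⟪a, y⟫) (c r : ℝ) :
    ∃ T B : E →L[ℝ] ℝ,
      HasFDerivAt (fun z : E =>
          (c * r * (‖a‖ * ‖z‖ + ⟪a, z⟫) ^ (r - 1) * (‖a‖ * ‖z‖⁻¹)) • innerSL ℝ z
            + (c * r * (‖a‖ * ‖z‖ + ⟪a, z⟫) ^ (r - 1)) • innerSL ℝ a)
        ((c * r * (‖a‖ * ‖y‖ + ⟪a, y⟫) ^ (r - 1) * (‖a‖ * ‖y‖⁻¹)) • innerSL' E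
          + T.smulRight (innerSL ℝ y) + B.smulRight (innerSL ℝ a)) y ∧
      T y = c * r * (r - 2) * (‖a‖ * ‖y‖ + ⟪a, y⟫) ^ (r - 1) * ‖a‖ / ‖y‖ ∧
      B a = c * r * (r - 1) * (‖a‖ * ‖y‖ + ⟪a, y⟫) ^ (r - 1) * ‖a‖ / ‖y‖ := by
  have hR : (0:ℝ) < ‖y‖ := norm_pos_iff.mpr hy
  set U : ℝ := ‖a‖ * ‖y‖ + ⟪a, y⟫ with hUdef
  set Du : E →L[ℝ] ℝ := (‖a‖ * ‖y‖⁻¹) • innerSL ℝ y + innerSL ℝ a with hDu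
  set B : E →L[ℝ] ℝ := (c * r) • (((r - 1) * U ^ (r - 1 - 1)) • Du) with hB
  set w' : E →L[ℝ] ℝ := ‖a‖ • ((-(‖y‖ ^ 2)⁻¹) • (‖y‖⁻¹ • innerSL ℝ y)) with hw'
  set T : E →L[ℝ] ℝ := (c * r * U ^ (r - 1)) • w' + (‖a‖ * ‖y‖⁻¹) • B with hT
  have hpow : U ^ (r - 1 - 1) = U ^ (r - 1) / U := by
    rw [eq_div_iff hU.ne']
    calc U ^ (r - 1 - 1) * U = U ^ (r - 1 - 1) * U ^ (1:ℝ) := by rw [Real.rpow_one]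
      _ = U ^ (r - 1 - 1 + 1) := (Real.rpow_add hU _ _).symm
      _ = U ^ (r - 1) := by norm_num
  have hI : ⟪a, y⟫ = U - ‖a‖ * ‖y‖ := by rw [hUdef]; ring
  have hβ : HasFDerivAt (fun z : E => c * r * (‖a‖ * ‖z‖ + ⟪a, z⟫) ^ (r - 1)) B y :=
    ((u_hasFDerivAt a hy).rpow_const (p := r - 1) (Or.inl hU.ne')).const_mul (c * r)
  have hinv : HasFDerivAt (fun z : E => ‖z‖⁻¹) ((-(‖y‖ ^ 2)⁻¹) • (‖y‖⁻¹ • innerSL ℝ y)) y :=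
    (hasDerivAt_inv hR.ne').comp_hasFDerivAt (f := fun z : E => ‖z‖) y (norm_hasFDerivAt' hy)
  have hw : HasFDerivAt (fun z : E => ‖a‖ * ‖z‖⁻¹) w' y := hinv.const_mul ‖a‖
  have hα : HasFDerivAt
      (fun z : E => c * r * (‖a‖ * ‖z‖ + ⟪a, z⟫) ^ (r - 1) * (‖a‖ * ‖z‖⁻¹)) T y := hβ.mul hw
  have hA1 := hα.smul ((innerSL' E).hasFDerivAt (x := y))
  have hA2 := hβ.smul_const (innerSL ℝ a)
  have hG := hA1.add hA2
  refine ⟨T, B, hG, ?_, ?_⟩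
  · have h1 : ⟪y, y⟫ = ‖y‖ ^ 2 := real_inner_self_eq_norm_sq y
    simp only [hT, hB, hw', hDu, ContinuousLinearMap.add_apply, ContinuousLinearMap.smul_apply,
      innerSL_apply_apply, smul_eq_mul, h1, hI, hpow]
    field_simp
    ring
  · have h1 : ⟪a, a⟫ = ‖a‖ ^ 2 := real_inner_self_eq_norm_sq a
    have h2 : ⟪y, a⟫ = U - ‖a‖ * ‖y‖ := by rw [← real_inner_comm, hI]
    simp only [hB, hDu, ContinuousLinearMap.add_apply, ContinuousLinearMap.smul_apply,
      innerSL_apply_apply, smul_eq_mul, h1, h2, hpow]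
    field_simp
    ring

theorem u_nonneg (a y : E) : 0 ≤ ‖a‖ * ‖y‖ + ⟪a, y⟫ := by
  have h := real_inner_le_norm a (-y)
  rw [inner_neg_right, norm_neg] at h
  linarith

theorem mem_S_iff (a : E) (ha : a ≠ 0) (y : E) :
    (¬ ∃ τ : ℝ, 0 ≤ τ ∧ y = -(τ • (‖a‖⁻¹ • a))) ↔ 0 < ‖a‖ * ‖y‖ + ⟪a, y⟫ := by
  have hL : (0:ℝ) < ‖a‖ := norm_pos_iff.mpr ha
  constructor
  · intro h
    rcases (u_nonneg a y).lt_or_eq with h0 | h0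
    · exact h0
    · exfalso
      apply h
      have h1 : ⟪a, -y⟫ = ‖a‖ * ‖-y‖ := by
        rw [inner_neg_right, norm_neg]; linarith
      rw [inner_eq_norm_mul_iff_real] at h1
      rw [norm_neg, smul_neg] at h1
      have h3 : y = -(‖y‖ • ‖a‖⁻¹ • a) := by
        have h4 : ‖a‖ • y = -(‖y‖ • a) := by rw [h1, neg_neg]
        have h5 := congrArg (fun v => ‖a‖⁻¹ • v) h4
        simp only [inv_smul_smul₀ hL.ne'] at h5
        have h6 : ‖a‖⁻¹ • -(‖y‖ • a) = -(‖y‖ • ‖a‖⁻¹ • a) := by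
          rw [smul_neg, smul_comm]
        exact h5.trans h6
      exact ⟨‖y‖, norm_nonneg y, h3⟩
  · rintro h ⟨τ, hτ, rfl⟩
    simp only [norm_neg, norm_smul, norm_inv, norm_norm, inner_neg_right,
      real_inner_smul_right, real_inner_self_eq_norm_mul_norm, Real.norm_eq_abs,
      abs_of_nonneg hτ] at h
    field_simp at h
    rw [abs_of_nonneg (norm_nonneg a)] at h
    simp at h

end aux

theorem sum_apply_inner {n : ℕ} (T : EuclideanSpace ℝ (Fin n) →L[ℝ] ℝ)
    (c : EuclideanSpace ℝ (Fin n)) :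
    ∑ i : Fin n, T (EuclideanSpace.single i 1) * ⟪c, EuclideanSpace.single i 1⟫ = T c := by
  have hb := (EuclideanSpace.basisFun (Fin n) ℝ).sum_repr c
  conv_rhs => rw [← hb]
  rw [map_sum]
  congr 1; funext i
  rw [EuclideanSpace.basisFun_repr, EuclideanSpace.basisFun_apply, map_smul]
  have : ⟪c, EuclideanSpace.single i 1⟫ = c i := by
    rw [EuclideanSpace.inner_single_right]; simp
  rw [this, smul_eq_mul, mul_comm]

theorem sum_inner_self {n : ℕ} :
    ∑ i : Fin n, (⟪(EuclideanSpace.single i 1 : EuclideanSpace ℝ (Fin n)),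
        EuclideanSpace.single i 1⟫ : ℝ) = n := by
  have : ∀ i : Fin n, (⟪(EuclideanSpace.single i 1 : EuclideanSpace ℝ (Fin n)),
      EuclideanSpace.single i 1⟫ : ℝ) = 1 := by
    intro i; rw [EuclideanSpace.inner_single_right]; simp [EuclideanSpace.single_apply]
  simp [this]

set_option maxHeartbeats 2000000 in
theorem stmt_2 (n : ℕ) (hn : 2 ≤ n) (m : ℝ) (hm : mstar n < m) (hm1 : m < 1)
    (a : EuclideanSpace ℝ (Fin n)) (ha : a ≠ 0)
    (A : ℝ)
    (hA : A = (((n : ℝ) - 1) * m / (1 - m) * (m - ((n : ℝ) - 3) / ((n : ℝ) - 1)))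
        ^ ((1 : ℝ) / (1 - m)))
    (φ : EuclideanSpace ℝ (Fin n) → ℝ)
    (hφ : ∀ y, φ y = A * (‖a‖ * ‖y‖ + ⟪a, y⟫) ^ (-(1 / (1 - m))))
    (S : Set (EuclideanSpace ℝ (Fin n)))
    (hS : S = {y | ¬ ∃ τ : ℝ, 0 ≤ τ ∧ y = -(τ • (‖a‖⁻¹ • a))}) :
    ContDiffOn ℝ (⊤ : ℕ∞) φ S ∧
    ∀ y ∈ S,
      lap (fun z => φ z ^ m) y = -⟪a, gradient φ y⟫ ∧
      lap (fun z => φ z ^ m) y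
        = A / (1 - m) * (‖a‖ / ‖y‖) * (‖a‖ * ‖y‖ + ⟪a, y⟫) ^ (-(1 / (1 - m))) ∧
      0 ≤ lap (fun z => φ z ^ m) y ∧
      lap (fun z => φ z ^ m) y + ⟪a, gradient φ y⟫ = 0 := by
  have hn2 : (2:ℝ) ≤ (n:ℝ) := by exact_mod_cast hn
  have hn1 : (1:ℝ) ≤ (n:ℝ) - 1 := by linarith
  have hn0 : ((n:ℝ) - 1) ≠ 0 := by linarith
  have h1m : (0:ℝ) < 1 - m := by
    have : mstar n < 1 := lt_of_lt_of_le hm hm1.le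
    linarith
  have hmkey : ((n:ℝ) - 3) / ((n:ℝ) - 1) < m ∧ 0 < m := by
    by_cases h2 : n = 2
    · subst h2
      rw [mstar, if_pos rfl] at hm
      norm_num
      constructor <;> linarith
    · rw [mstar, if_neg h2] at hm
      have h3 : 3 ≤ n := by omega
      have h3' : (3:ℝ) ≤ (n:ℝ) := by exact_mod_cast h3
      have hge : (0:ℝ) ≤ ((n:ℝ) - 3) / ((n:ℝ) - 1) := div_nonneg (by linarith) (by linarith)
      exact ⟨hm, lt_of_le_of_lt hge hm⟩
  obtain ⟨hm3, hm0⟩ := hmkey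
  have hL : (0:ℝ) < ‖a‖ := norm_pos_iff.mpr ha
  set Bb : ℝ := ((n : ℝ) - 1) * m / (1 - m) * (m - ((n : ℝ) - 3) / ((n : ℝ) - 1)) with hBb
  have hBb0 : 0 < Bb := by
    apply mul_pos
    · apply div_pos (mul_pos (by linarith) hm0) h1m
    · linarith
  have hA0 : 0 < A := by rw [hA]; exact Real.rpow_pos_of_pos hBb0 _
  have hSu : ∀ z, z ∈ S ↔ 0 < ‖a‖ * ‖z‖ + ⟪a, z⟫ := by
    intro z; rw [hS]; exact mem_S_iff a ha z
  have hSopen : IsOpen S := by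
    have hset : S = (fun z : EuclideanSpace ℝ (Fin n) => ‖a‖ * ‖z‖ + ⟪a, z⟫) ⁻¹' Set.Ioi 0 := by
      ext z; simpa using hSu z
    rw [hset]
    exact isOpen_Ioi.preimage ((continuous_const.mul continuous_norm).add
      (Continuous.inner continuous_const continuous_id))
  have hzne : ∀ z ∈ S, z ≠ 0 := by
    intro z hz h0
    have := (hSu z).mp hz
    rw [h0] at this
    simp at this
  have hφfun : φ = fun z => A * (‖a‖ * ‖z‖ + ⟪a, z⟫) ^ (-(1 / (1 - m))) := funext hφ
  -- smoothness
  have hsmooth : ContDiffOn ℝ (⊤ : ℕ∞) φ S := by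
    intro y hy
    have hU := (hSu y).mp hy
    have hy0 := hzne y hy
    apply ContDiffAt.contDiffWithinAt
    rw [hφfun]
    have h1 : ContDiffAt ℝ (⊤ : ℕ∞) (fun z : EuclideanSpace ℝ (Fin n) => ‖a‖ * ‖z‖ + ⟪a, z⟫) y :=
      (contDiffAt_const.mul (contDiffAt_norm ℝ hy0)).add
        (ContDiffAt.inner ℝ contDiffAt_const contDiffAt_id)
    exact contDiffAt_const.mul (h1.rpow_const_of_ne hU.ne')
  refine ⟨hsmooth, ?_⟩
  intro y hyS
  have hU : 0 < ‖a‖ * ‖y‖ + ⟪a, y⟫ := (hSu y).mp hyS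
  have hy0 : y ≠ 0 := hzne y hyS
  have hR : (0:ℝ) < ‖y‖ := norm_pos_iff.mpr hy0
  set q : ℝ := -(1 / (1 - m)) * m with hq
  -- gradient of φ
  have hDφ := pow_hasFDerivAt a hy0 hU.ne' A (-(1 / (1 - m)))
  rw [← hφfun] at hDφ
  have hgrad : ⟪a, gradient φ y⟫
      = -(A / (1 - m) * (‖a‖ / ‖y‖) * (‖a‖ * ‖y‖ + ⟪a, y⟫) ^ (-(1 / (1 - m)))) := by
    rw [real_inner_comm]
    simp only [gradient]
    rw [InnerProductSpace.toDual_symm_apply, hDφ.fderiv]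
    set U : ℝ := ‖a‖ * ‖y‖ + ⟪a, y⟫ with hUdef
    have hI : ⟪a, y⟫ = U - ‖a‖ * ‖y‖ := by rw [hUdef]; ring
    have h1 : ⟪a, a⟫ = ‖a‖ ^ 2 := real_inner_self_eq_norm_sq a
    have h2 : ⟪y, a⟫ = U - ‖a‖ * ‖y‖ := by rw [real_inner_comm a y, hI]
    have hpow : U ^ (-(1 / (1 - m)) - 1) = U ^ (-(1 / (1 - m))) / U := by
      rw [Real.rpow_sub hU, Real.rpow_one]
    have hUne : U ≠ 0 := hU.ne'
    have hRne : ‖y‖ ≠ 0 := hR.ne'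
    have h1mne : (1 - m) ≠ 0 := h1m.ne'
    simp only [ContinuousLinearMap.add_apply, ContinuousLinearMap.smul_apply,
      innerSL_apply_apply, smul_eq_mul, h1, h2, hpow]
    field_simp
    ring
  -- φ ^ m equals the power function on S
  have hfeq : ∀ z ∈ S, φ z ^ m = A ^ m * (‖a‖ * ‖z‖ + ⟪a, z⟫) ^ q := by
    intro z hz
    have hUz : (0:ℝ) < ‖a‖ * ‖z‖ + ⟪a, z⟫ := (hSu z).mp hz
    rw [hφ z, Real.mul_rpow hA0.le (Real.rpow_nonneg hUz.le _), ← Real.rpow_mul hUz.le]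
  -- first derivative of φ ^ m on S
  have hfd : ∀ z ∈ S, HasFDerivAt (fun w => φ w ^ m)
      ((A ^ m * q * (‖a‖ * ‖z‖ + ⟪a, z⟫) ^ (q - 1) * (‖a‖ * ‖z‖⁻¹)) • innerSL ℝ z
        + (A ^ m * q * (‖a‖ * ‖z‖ + ⟪a, z⟫) ^ (q - 1)) • innerSL ℝ a) z := by
    intro z hz
    have hUz : (0:ℝ) < ‖a‖ * ‖z‖ + ⟪a, z⟫ := (hSu z).mp hz
    have h1 := pow_hasFDerivAt a (hzne z hz) hUz.ne' (A ^ m) q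
    apply h1.congr_of_eventuallyEq
    filter_upwards [hSopen.mem_nhds hz] with w hw
    exact hfeq w hw
  obtain ⟨T, B, hG, hTval, hBval⟩ := G_hasFDerivAt a hy0 hU (A ^ m) q
  have h2nd : fderiv ℝ (fderiv ℝ (fun w => φ w ^ m)) y
      = (A ^ m * q * (‖a‖ * ‖y‖ + ⟪a, y⟫) ^ (q - 1) * (‖a‖ * ‖y‖⁻¹)) • innerSL' (EuclideanSpace ℝ (Fin n))
          + T.smulRight (innerSL ℝ y) + B.smulRight (innerSL ℝ a) := by
    have hev : fderiv ℝ (fun w => φ w ^ m) =ᶠ[nhds y] (fun z =>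
        (A ^ m * q * (‖a‖ * ‖z‖ + ⟪a, z⟫) ^ (q - 1) * (‖a‖ * ‖z‖⁻¹)) • innerSL ℝ z
          + (A ^ m * q * (‖a‖ * ‖z‖ + ⟪a, z⟫) ^ (q - 1)) • innerSL ℝ a) := by
      filter_upwards [hSopen.mem_nhds hyS] with z hz
      exact (hfd z hz).fderiv
    rw [hev.fderiv_eq, hG.fderiv]
  -- compute the laplacian
  have hlap : lap (fun z => φ z ^ m) y
      = A ^ m * q * (‖a‖ * ‖y‖ + ⟪a, y⟫) ^ (q - 1) * (‖a‖ * ‖y‖⁻¹) * (n:ℝ) + T y + B a := by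
    rw [lap]
    have hterm : ∀ i : Fin n,
        iteratedFDeriv ℝ 2 (fun z => φ z ^ m) y ![EuclideanSpace.single i 1, EuclideanSpace.single i 1]
        = A ^ m * q * (‖a‖ * ‖y‖ + ⟪a, y⟫) ^ (q - 1) * (‖a‖ * ‖y‖⁻¹)
              * ⟪(EuclideanSpace.single i 1 : EuclideanSpace ℝ (Fin n)), EuclideanSpace.single i 1⟫
            + T (EuclideanSpace.single i 1) * ⟪y, EuclideanSpace.single i 1⟫
            + B (EuclideanSpace.single i 1) * ⟪a, EuclideanSpace.single i 1⟫ := by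
      intro i
      rw [iteratedFDeriv_two_apply, h2nd]
      simp [innerSL', innerSL_apply_apply, ContinuousLinearMap.add_apply, ContinuousLinearMap.smul_apply,
        ContinuousLinearMap.smulRight_apply, smul_eq_mul]
      erw [innerSL_apply_apply]; simp
    rw [Finset.sum_congr rfl (fun i _ => hterm i)]
    rw [Finset.sum_add_distrib, Finset.sum_add_distrib, ← Finset.mul_sum,
      sum_inner_self, sum_apply_inner, sum_apply_inner]
  -- key algebraic identities
  have hq1 : q - 1 = -(1 / (1 - m)) := by
    rw [hq]; field_simp; ring
  have hqid : q * ((n:ℝ) + 2*q - 3) = Bb * (1 / (1 - m)) := by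
    rw [hq, hBb]; field_simp; ring
  have hAB : A ^ m * Bb = A := by
    rw [hA, ← Real.rpow_mul hBb0.le]
    have h1 : Bb ^ ((1:ℝ) / (1 - m) * m) * Bb ^ (1:ℝ) = Bb ^ ((1:ℝ) / (1 - m) * m + 1) :=
      (Real.rpow_add hBb0 _ _).symm
    rw [Real.rpow_one] at h1
    rw [h1]
    congr 1
    field_simp
    ring
  have hkey : A ^ m * q * ((n:ℝ) + 2*q - 3) = A / (1 - m) := by
    have : A ^ m * q * ((n:ℝ) + 2*q - 3) = A ^ m * (q * ((n:ℝ) + 2*q - 3)) := by ring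
    rw [this, hqid, ← mul_assoc, hAB]
    ring
  -- final value of the laplacian
  have hval : lap (fun z => φ z ^ m) y
      = A / (1 - m) * (‖a‖ / ‖y‖) * (‖a‖ * ‖y‖ + ⟪a, y⟫) ^ (-(1 / (1 - m))) := by
    rw [hlap, hTval, hBval, hq1]
    have hRne : ‖y‖ ≠ 0 := hR.ne'
    have h1minv : (1 - m)⁻¹ * (1 - m) = 1 := inv_mul_cancel₀ h1m.ne'
    linear_combination ((‖a‖ * ‖y‖ + ⟪a, y⟫) ^ (-(1 / (1 - m))) * ‖a‖ / ‖y‖) * hkey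
      + (A ^ m * m * (‖a‖ * ‖y‖ + ⟪a, y⟫) ^ (-(1 / (1 - m))) * ‖a‖ * ‖y‖⁻¹ * (1 - m)⁻¹) * h1minv
  refine ⟨?_, hval, ?_, ?_⟩
  · rw [hval, hgrad, neg_neg]
  · rw [hval]
    apply mul_nonneg (mul_nonneg (div_nonneg hA0.le h1m.le)
      (div_nonneg (norm_nonneg a) (norm_nonneg y))) (Real.rpow_nonneg hU.le _)
  · rw [hval, hgrad]; ring
end

section
/- Let n ≥ 2, m_* < m < 1, c > 0, let ω ∈ ℝⁿ be a unit vector and set a := c·ω. Then the function u(x,t) := A·(|a|·|x − t·a| + a·(x − t·a))^{−1/(1−m)} is smooth and satisfies ∂ₜu = Δ(uᵐ) at every point (x,t) ∈ ℝⁿ⁺¹ with x ∉ {s·ω : −∞ < s ≤ ct}; moreover, for each t ∈ ℝ and each s₀ < ct, u(x,t) → ∞ as x → s₀·ω. -/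
open scoped RealInnerProductSpace
open Filter Topology Set

variable {F : Type*} [NormedAddCommGroup F] [InnerProductSpace ℝ F]
lemma my_hasFDerivAt_norm {y : F} (hy : y ≠ 0) :
    HasFDerivAt (fun z : F => ‖z‖) (‖y‖⁻¹ • innerSL ℝ y) y := by
  have hr : (0:ℝ) < ‖y‖ := norm_pos_iff.2 hy
  have h1 : HasFDerivAt (fun x : F => ‖x‖ ^ 2) (2 • innerSL ℝ y) y :=
    (hasStrictFDerivAt_norm_sq y).hasFDerivAt
  have h2 : HasDerivAt Real.sqrt (1 / (2 * ‖y‖)) (‖y‖ ^ 2) := by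
    have := Real.hasDerivAt_sqrt (x := ‖y‖ ^ 2) (by positivity)
    rw [Real.sqrt_sq (norm_nonneg y)] at this
    exact this
  have h3 := h2.comp_hasFDerivAt y h1
  rw [show Real.sqrt ∘ (fun x : F => ‖x‖ ^ 2) = fun x : F => ‖x‖ from
    funext fun x => Real.sqrt_sq (norm_nonneg x)] at h3
  have hs : (1 / (2 * ‖y‖)) • (2 • innerSL ℝ y) = ‖y‖⁻¹ • innerSL ℝ y := by
    ext v
    simp only [ContinuousLinearMap.smul_apply, smul_eq_mul, ContinuousLinearMap.coe_smul',
      Pi.smul_apply, nsmul_eq_mul, Nat.cast_ofNat]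
    field_simp
  rwa [hs] at h3

lemma hasFDerivAt_G (c : ℝ) (a b : F) {z : F} (hz : z - b ≠ 0) :
    HasFDerivAt (fun w : F => c * ‖w - b‖ + ⟪a, w - b⟫)
      (c • (‖z - b‖⁻¹ • innerSL ℝ (z - b)) + innerSL ℝ a) z := by
  have hsub : HasFDerivAt (fun w : F => w - b) (ContinuousLinearMap.id ℝ F) z :=
    (hasFDerivAt_id z).sub_const b
  have h1 : HasFDerivAt (fun w : F => ‖w - b‖) (‖z - b‖⁻¹ • innerSL ℝ (z - b)) z := by
    simpa [Function.comp_def] using (my_hasFDerivAt_norm hz).comp z hsub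
  have h2 : HasFDerivAt (fun w : F => ⟪a, w - b⟫) (innerSL ℝ a) z := by
    simpa [Function.comp_def] using ((innerSL ℝ a).hasFDerivAt (x := z - b)).comp z hsub
  exact (h1.const_mul c).add h2

lemma sub_ne_zero_of_G_pos {c : ℝ} {a b z : F} (hz : 0 < c * ‖z - b‖ + ⟪a, z - b⟫) :
    z - b ≠ 0 := by
  intro h
  rw [h] at hz
  simp at hz

lemma hasFDerivAt_Grpow (c q C : ℝ) (a b : F) {z : F}
    (hz : 0 < c * ‖z - b‖ + ⟪a, z - b⟫) :
    HasFDerivAt (fun w : F => C * (c * ‖w - b‖ + ⟪a, w - b⟫) ^ q)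
      ((C * (q * (c * ‖z - b‖ + ⟪a, z - b⟫) ^ (q - 1))) •
        (c • (‖z - b‖⁻¹ • innerSL ℝ (z - b)) + innerSL ℝ a)) z := by
  have h0 := sub_ne_zero_of_G_pos hz
  have hpow : HasDerivAt (fun s : ℝ => s ^ q)
      (q * (c * ‖z - b‖ + ⟪a, z - b⟫) ^ (q - 1)) (c * ‖z - b‖ + ⟪a, z - b⟫) :=
    Real.hasDerivAt_rpow_const (Or.inl hz.ne')
  have := (hpow.comp_hasFDerivAt z (hasFDerivAt_G c a b h0)).const_mul C
  simpa [smul_smul, mul_assoc] using this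

lemma G_continuous (c : ℝ) (a b : F) :
    Continuous (fun z : F => c * ‖z - b‖ + ⟪a, z - b⟫) := by
  apply Continuous.add
  · exact continuous_const.mul ((continuous_id.sub continuous_const).norm)
  · exact Continuous.inner continuous_const (continuous_id.sub continuous_const)

noncomputable def innerSLR (F : Type*) [NormedAddCommGroup F] [InnerProductSpace ℝ F] :
    F →L[ℝ] (F →L[ℝ] ℝ) := innerSL ℝ

@[simp] lemma innerSLR_apply {F : Type*} [NormedAddCommGroup F] [InnerProductSpace ℝ F]
    (x y : F) : innerSLR F x y = ⟪x, y⟫ := rfl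

lemma second_deriv_key (c q C : ℝ) (a b : F) {x : F}
    (hg : 0 < c * ‖x - b‖ + ⟪a, x - b⟫) (v : F) :
    fderiv ℝ (fderiv ℝ (fun z : F => C * (c * ‖z - b‖ + ⟪a, z - b⟫) ^ q)) x v v
      = C * q * (q - 1) * (c * ‖x - b‖ + ⟪a, x - b⟫) ^ (q - 2)
          * (c * (‖x - b‖⁻¹ * ⟪x - b, v⟫) + ⟪a, v⟫) ^ 2
        + C * q * (c * ‖x - b‖ + ⟪a, x - b⟫) ^ (q - 1) * c
          * (‖x - b‖⁻¹ * ⟪v, v⟫ - (‖x - b‖ ^ 2)⁻¹ * ‖x - b‖⁻¹ * ⟪x - b, v⟫ ^ 2) := by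
  have hy : x - b ≠ 0 := sub_ne_zero_of_G_pos hg
  have hr : (0:ℝ) < ‖x - b‖ := norm_pos_iff.2 hy
  -- eventual equality of fderiv with Φ
  have hV : IsOpen {z : F | 0 < c * ‖z - b‖ + ⟪a, z - b⟫} :=
    isOpen_lt continuous_const (G_continuous c a b)
  have hev : fderiv ℝ (fun z : F => C * (c * ‖z - b‖ + ⟪a, z - b⟫) ^ q)
      =ᶠ[nhds x] fun z : F => (C * (q * (c * ‖z - b‖ + ⟪a, z - b⟫) ^ (q - 1))) •
        (c • (‖z - b‖⁻¹ • innerSL ℝ (z - b)) + innerSL ℝ a) := by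
    filter_upwards [hV.mem_nhds hg] with z hz
    exact (hasFDerivAt_Grpow c q C a b hz).fderiv
  rw [hev.fderiv_eq]
  -- derivatives of the pieces
  have hsub : HasFDerivAt (fun w : F => w - b) (ContinuousLinearMap.id ℝ F) x :=
    (hasFDerivAt_id x).sub_const b
  have hnrm : HasFDerivAt (fun z : F => ‖z - b‖) (‖x - b‖⁻¹ • innerSL ℝ (x - b)) x := by
    simpa [Function.comp_def] using (my_hasFDerivAt_norm hy).comp x hsub
  have hinv : HasFDerivAt (fun z : F => ‖z - b‖⁻¹)
      ((-(‖x - b‖ ^ 2)⁻¹) • (‖x - b‖⁻¹ • innerSL ℝ (x - b))) x := by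
    have := (hasDerivAt_inv hr.ne').comp_hasFDerivAt x hnrm
    simpa [Function.comp_def] using this
  have hisl : HasFDerivAt (fun z : F => (innerSLR F (z - b) : F →L[ℝ] ℝ)) (innerSLR F) x :=
    (innerSLR F).hasFDerivAt.comp x hsub
  have hN : HasFDerivAt
      (fun z : F => c • (‖z - b‖⁻¹ • innerSL ℝ (z - b)) + innerSL ℝ a)
      (c • ((‖x - b‖⁻¹ • innerSLR F)
        + ((-(‖x - b‖ ^ 2)⁻¹) • (‖x - b‖⁻¹ • innerSL ℝ (x - b))).smulRight
            (innerSLR F (x - b)))) x := by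
    have h1 : (fun z : F => c • (‖z - b‖⁻¹ • innerSL ℝ (z - b)) + innerSL ℝ a)
        = fun z : F => c • (‖z - b‖⁻¹ • innerSLR F (z - b)) + innerSL ℝ a := rfl
    rw [h1]
    have h2 : HasFDerivAt (fun z : F => ‖z - b‖⁻¹ • innerSLR F (z - b))
        (‖x - b‖⁻¹ • innerSLR F
          + ((-(‖x - b‖ ^ 2)⁻¹) • (‖x - b‖⁻¹ • innerSL ℝ (x - b))).smulRight
            (innerSLR F (x - b))) x := hinv.smul hisl
    exact (h2.const_smul c).add_const (innerSL ℝ a)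
  have hψ : HasFDerivAt (fun z : F => C * (q * (c * ‖z - b‖ + ⟪a, z - b⟫) ^ (q - 1)))
      (((C * q) * ((q - 1) * (c * ‖x - b‖ + ⟪a, x - b⟫) ^ (q - 1 - 1))) •
        (c • (‖x - b‖⁻¹ • innerSL ℝ (x - b)) + innerSL ℝ a)) x := by
    have h := hasFDerivAt_Grpow c (q - 1) (C * q) a b hg
    have : (fun w : F => (C * q) * (c * ‖w - b‖ + ⟪a, w - b⟫) ^ (q - 1))
        = fun w : F => C * (q * (c * ‖w - b‖ + ⟪a, w - b⟫) ^ (q - 1)) := by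
      funext w; ring
    rwa [this] at h
  have hΦ : HasFDerivAt (fun z : F => (C * (q * (c * ‖z - b‖ + ⟪a, z - b⟫) ^ (q - 1))) •
      (c • (‖z - b‖⁻¹ • innerSL ℝ (z - b)) + innerSL ℝ a)) _ x := hψ.smul hN
  rw [hΦ.fderiv]
  have h2 : q - 1 - 1 = q - 2 := by ring
  simp only [ContinuousLinearMap.add_apply, ContinuousLinearMap.smul_apply,
    ContinuousLinearMap.smulRight_apply, ContinuousLinearMap.coe_smul', Pi.smul_apply,
    innerSL_apply_apply, innerSLR_apply, smul_eq_mul, h2, ContinuousLinearMap.coe_id', id_eq]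
  ring

lemma lap_G_rpow {n : ℕ} (c q C : ℝ) (a b x : EuclideanSpace ℝ (Fin n))
    (hc2 : ⟪a, a⟫ = c ^ 2)
    (hg : 0 < c * ‖x - b‖ + ⟪a, x - b⟫) :
    lap (fun z => C * (c * ‖z - b‖ + ⟪a, z - b⟫) ^ q) x
      = C * q * (2 * q + (n : ℝ) - 3) * (c / ‖x - b‖)
        * (c * ‖x - b‖ + ⟪a, x - b⟫) ^ (q - 1) := by
  have hy : x - b ≠ 0 := sub_ne_zero_of_G_pos hg
  have hr : (0:ℝ) < ‖x - b‖ := norm_pos_iff.2 hy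
  have hterm : ∀ i : Fin n,
      iteratedFDeriv ℝ 2 (fun z => C * (c * ‖z - b‖ + ⟪a, z - b⟫) ^ q) x
        ![EuclideanSpace.single i 1, EuclideanSpace.single i 1]
      = C * q * (q - 1) * (c * ‖x - b‖ + ⟪a, x - b⟫) ^ (q - 2)
          * (c * (‖x - b‖⁻¹ * (x - b) i) + a i) ^ 2
        + C * q * (c * ‖x - b‖ + ⟪a, x - b⟫) ^ (q - 1) * c
          * (‖x - b‖⁻¹ - (‖x - b‖ ^ 2)⁻¹ * ‖x - b‖⁻¹ * ((x - b) i) ^ 2) := by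
    intro i
    rw [iteratedFDeriv_two_apply]
    simp only [Matrix.cons_val_zero, Matrix.cons_val_one, Matrix.head_cons]
    rw [second_deriv_key c q C a b hg]
    simp [EuclideanSpace.inner_single_right, EuclideanSpace.single_apply]
  unfold lap
  rw [Finset.sum_congr rfl (fun i _ => hterm i)]
  have hyy : ∑ i, ((x - b) i * (x - b) i) = ‖x - b‖ ^ 2 := by
    rw [← real_inner_self_eq_norm_sq]
    simp only [PiLp.inner_apply, RCLike.inner_apply, conj_trivial]
  have hay : ∑ i, (a i * (x - b) i) = ⟪a, x - b⟫ := by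
    simp [PiLp.inner_apply, RCLike.inner_apply, mul_comm]
  have haa : ∑ i, (a i * a i) = c ^ 2 := by
    rw [← hc2]; simp only [PiLp.inner_apply, RCLike.inner_apply, conj_trivial]
  set r := ‖x - b‖ with hrdef
  set w := ⟪a, x - b⟫ with hwdef
  have hsplit : (c * r + w) ^ (q - 1) = (c * r + w) ^ (q - 2) * (c * r + w) := by
    have h := Real.rpow_add hg (q - 2) 1
    rw [Real.rpow_one] at h
    rw [show q - 1 = q - 2 + 1 by ring, h]
  calc
    ∑ i, (C * q * (q - 1) * (c * r + w) ^ (q - 2) * (c * (r⁻¹ * (x - b) i) + a i) ^ 2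
        + C * q * (c * r + w) ^ (q - 1) * c
          * (r⁻¹ - (r ^ 2)⁻¹ * r⁻¹ * ((x - b) i) ^ 2))
      = ∑ i, ((C * q * (q - 1) * (c * r + w) ^ (q - 2) * c ^ 2 * r⁻¹ ^ 2
            - C * q * (c * r + w) ^ (q - 1) * c * ((r ^ 2)⁻¹ * r⁻¹)) * ((x - b) i * (x - b) i)
          + (2 * C * q * (q - 1) * (c * r + w) ^ (q - 2) * c * r⁻¹) * (a i * (x - b) i)
          + (C * q * (q - 1) * (c * r + w) ^ (q - 2)) * (a i * a i)
          + C * q * (c * r + w) ^ (q - 1) * c * r⁻¹) := by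
        refine Finset.sum_congr rfl fun i _ => by ring
    _ = (C * q * (q - 1) * (c * r + w) ^ (q - 2) * c ^ 2 * r⁻¹ ^ 2
            - C * q * (c * r + w) ^ (q - 1) * c * ((r ^ 2)⁻¹ * r⁻¹)) * (∑ i, ((x - b) i * (x - b) i))
          + (2 * C * q * (q - 1) * (c * r + w) ^ (q - 2) * c * r⁻¹) * (∑ i, (a i * (x - b) i))
          + (C * q * (q - 1) * (c * r + w) ^ (q - 2)) * (∑ i, (a i * a i))
          + (n : ℝ) * (C * q * (c * r + w) ^ (q - 1) * c * r⁻¹) := by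
        rw [Finset.sum_add_distrib, Finset.sum_add_distrib, Finset.sum_add_distrib,
          ← Finset.mul_sum, ← Finset.mul_sum, ← Finset.mul_sum, Finset.sum_const,
          Finset.card_univ, Fintype.card_fin, nsmul_eq_mul]
    _ = C * q * (2 * q + (n : ℝ) - 3) * (c / r) * (c * r + w) ^ (q - 1) := by
        rw [hyy, hay, haa, hsplit]
        field_simp
        ring

lemma deriv_time (c p A' : ℝ) (a x : F) (t : ℝ) (hca : ⟪a, a⟫ = c ^ 2)
    (hg : 0 < c * ‖x - t • a‖ + ⟪a, x - t • a⟫) :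
    deriv (fun τ : ℝ => A' * (c * ‖x - τ • a‖ + ⟪a, x - τ • a⟫) ^ (-p)) t
      = A' * p * (c / ‖x - t • a‖) * (c * ‖x - t • a‖ + ⟪a, x - t • a⟫) ^ (-p) := by
  have hy : x - t • a ≠ 0 := by
    intro h
    rw [h] at hg; simp at hg
  have hr : (0:ℝ) < ‖x - t • a‖ := norm_pos_iff.2 hy
  have h1 : HasDerivAt (fun τ : ℝ => x - τ • a) (-a) t := by
    simpa using ((hasDerivAt_id t).smul_const a).const_sub x
  have hy0 : (x - t • a) - 0 ≠ 0 := by simpa using hy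
  have h2 := (hasFDerivAt_G c a 0 hy0).comp_hasDerivAt t h1
  simp only [sub_zero] at h2
  have h3 := ((Real.hasDerivAt_rpow_const (p := -p) (Or.inl hg.ne')).comp t h2).const_mul A'
  have h4 := h3.deriv
  simp only [Function.comp_def] at h4
  rw [h4]
  have hsplit : (c * ‖x - t • a‖ + ⟪a, x - t • a⟫) ^ (-p)
      = (c * ‖x - t • a‖ + ⟪a, x - t • a⟫) ^ (-p - 1)
        * (c * ‖x - t • a‖ + ⟪a, x - t • a⟫) := by
    have h := Real.rpow_add hg (-p - 1) 1
    rw [Real.rpow_one] at h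
    rw [← h]
    congr 1
    ring
  rw [hsplit]
  simp only [ContinuousLinearMap.add_apply, ContinuousLinearMap.smul_apply, innerSL_apply_apply,
    smul_eq_mul, inner_neg_right, real_inner_comm (x - t • a) a, hca]
  field_simp
  ring

lemma region_iff (c t : ℝ) (hc : 0 < c) (ω x : F) (hω : ‖ω‖ = 1) :
    (¬ ∃ σ : ℝ, σ ≤ c * t ∧ x = σ • ω) ↔
      0 < c * ‖x - t • (c • ω)‖ + ⟪c • ω, x - t • (c • ω)⟫ := by
  have hts : t • (c • ω) = (t * c) • ω := smul_smul t c ω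
  have hrw : c * ‖x - t • (c • ω)‖ + ⟪c • ω, x - t • (c • ω)⟫
      = c * (‖x - (t * c) • ω‖ + ⟪ω, x - (t * c) • ω⟫) := by
    rw [hts, real_inner_smul_left]; ring
  set y := x - (t * c) • ω with hy
  have hnn : 0 ≤ ‖y‖ + ⟪ω, y⟫ := by
    have habs := abs_real_inner_le_norm ω y
    rw [hω, one_mul] at habs
    have h2 := neg_abs_le (⟪ω, y⟫)
    linarith
  have key : (∃ σ : ℝ, σ ≤ c * t ∧ x = σ • ω) ↔ ‖y‖ + ⟪ω, y⟫ = 0 := by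
    constructor
    · rintro ⟨σ, hσ, rfl⟩
      have hyω : y = (σ - t * c) • ω := by rw [hy, ← sub_smul]
      have hσ' : σ - t * c ≤ 0 := by rw [mul_comm t c]; linarith
      rw [hyω, norm_smul, real_inner_smul_right, real_inner_self_eq_norm_sq, hω]
      simp only [Real.norm_eq_abs, abs_of_nonpos hσ']
      ring
    · intro h
      have h1 : ⟪ω, -y⟫ = ‖ω‖ * ‖-y‖ := by
        rw [inner_neg_right, norm_neg, hω, one_mul]; linarith
      have h2 := inner_eq_norm_mul_iff_real.mp h1
      rw [norm_neg, hω, one_smul] at h2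
      refine ⟨t * c - ‖y‖, by rw [mul_comm c t]; linarith [norm_nonneg y], ?_⟩
      have hx : x = y + (t * c) • ω := by rw [hy]; abel
      have hyneg : y = (-‖y‖) • ω := by rw [neg_smul, h2, neg_neg]
      calc x = y + (t * c) • ω := hx
        _ = (-‖y‖) • ω + (t * c) • ω := by rw [← hyneg]
        _ = (t * c - ‖y‖) • ω := by rw [← add_smul]; congr 1; ring
  rw [hrw]
  constructor
  · intro h
    have h0 : ‖y‖ + ⟪ω, y⟫ ≠ 0 := fun hh => h (key.2 hh)
    exact mul_pos hc (lt_of_le_of_ne hnn (Ne.symm h0))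
  · intro h hex
    rw [key.1 hex, mul_zero] at h
    exact lt_irrefl 0 h

theorem stmt_3 (n : ℕ) (hn : 2 ≤ n) (m : ℝ) (hm : mstar n < m) (hm1 : m < 1)
    (c : ℝ) (hc : 0 < c)
    (ω : EuclideanSpace ℝ (Fin n)) (hω : ‖ω‖ = 1)
    (a : EuclideanSpace ℝ (Fin n)) (ha : a = c • ω)
    (A : ℝ)
    (hA : A = (((n : ℝ) - 1) * m / (1 - m) * (m - ((n : ℝ) - 3) / ((n : ℝ) - 1)))
        ^ ((1 : ℝ) / (1 - m)))
    (u : EuclideanSpace ℝ (Fin n) → ℝ → ℝ)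
    (hu : ∀ x t, u x t
      = A * (‖a‖ * ‖x - t • a‖ + ⟪a, x - t • a⟫) ^ (-(1 / (1 - m)))) :
    ContDiffOn ℝ (⊤ : ℕ∞) (fun p : EuclideanSpace ℝ (Fin n) × ℝ => u p.1 p.2)
      {p : EuclideanSpace ℝ (Fin n) × ℝ | ¬ ∃ σ : ℝ, σ ≤ c * p.2 ∧ p.1 = σ • ω} ∧
    (∀ (x : EuclideanSpace ℝ (Fin n)) (t : ℝ), (¬ ∃ σ : ℝ, σ ≤ c * t ∧ x = σ • ω) →
      deriv (fun τ => u x τ) t = lap (fun y => u y t ^ m) x) ∧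
    (∀ t s₀ : ℝ, s₀ < c * t →
      Tendsto (fun x => u x t)
        (nhdsWithin (s₀ • ω) {y | ¬ ∃ σ : ℝ, σ ≤ c * t ∧ y = σ • ω}) atTop) := by
  have hn2 : (2:ℝ) ≤ (n:ℝ) := by exact_mod_cast hn
  have hn1 : (0:ℝ) < (n:ℝ) - 1 := by linarith
  have h1m : (0:ℝ) < 1 - m := by linarith
  have hmsnn : 0 ≤ mstar n := by
    unfold mstar
    split_ifs with h
    · exact le_refl 0
    · have hn3 : 3 ≤ n := by omega
      have hn3' : (3:ℝ) ≤ (n:ℝ) := by exact_mod_cast hn3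
      exact div_nonneg (by linarith) (by linarith)
  have hm0 : 0 < m := lt_of_le_of_lt hmsnn hm
  have hms : ((n:ℝ) - 3) / ((n:ℝ) - 1) ≤ mstar n := by
    unfold mstar
    split_ifs with h
    · rw [h]; norm_num
    · exact le_refl _
  have hKpos : (0:ℝ) < ((n:ℝ) - 1) * m / (1 - m) * (m - ((n:ℝ) - 3) / ((n:ℝ) - 1)) := by
    have h2 : 0 < m - ((n:ℝ) - 3) / ((n:ℝ) - 1) := by
      have := lt_of_le_of_lt hms hm
      linarith
    exact mul_pos (div_pos (mul_pos hn1 hm0) h1m) h2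
  have hApos : 0 < A := by rw [hA]; exact Real.rpow_pos_of_pos hKpos _
  have hA1m : A ^ (1 - m)
      = ((n:ℝ) - 1) * m / (1 - m) * (m - ((n:ℝ) - 3) / ((n:ℝ) - 1)) := by
    rw [hA, ← Real.rpow_mul hKpos.le, one_div, inv_mul_cancel₀ h1m.ne', Real.rpow_one]
  have hna : ‖a‖ = c := by rw [ha, norm_smul, hω, Real.norm_eq_abs, abs_of_pos hc, mul_one]
  have hca : ⟪a, a⟫ = c ^ 2 := by rw [real_inner_self_eq_norm_sq, hna]
  have hu' : ∀ x t, u x t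
      = A * (c * ‖x - t • a‖ + ⟪a, x - t • a⟫) ^ (-(1 / (1 - m))) := by
    intro x t; rw [hu, hna]
  have hreg : ∀ (x : EuclideanSpace ℝ (Fin n)) (t : ℝ),
      (¬ ∃ σ : ℝ, σ ≤ c * t ∧ x = σ • ω) ↔
        0 < c * ‖x - t • a‖ + ⟪a, x - t • a⟫ := by
    intro x t
    rw [ha]
    exact region_iff c t hc ω x hω
  have hGnn : ∀ (z : EuclideanSpace ℝ (Fin n)),
      0 ≤ c * ‖z‖ + ⟪a, z⟫ := by
    intro z
    have h1 := abs_real_inner_le_norm a z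
    have h2 := neg_abs_le (⟪a, z⟫)
    rw [hna] at h1
    linarith
  refine ⟨?_, ?_, ?_⟩
  · -- smoothness
    have hfun : (fun p : EuclideanSpace ℝ (Fin n) × ℝ => u p.1 p.2)
        = fun p => A * (c * ‖p.1 - p.2 • a‖ + ⟪a, p.1 - p.2 • a⟫) ^ (-(1 / (1 - m))) :=
      funext fun p => hu' p.1 p.2
    rw [hfun]
    intro p hp
    have hg : 0 < c * ‖p.1 - p.2 • a‖ + ⟪a, p.1 - p.2 • a⟫ := (hreg p.1 p.2).1 hp
    have hy : p.1 - p.2 • a ≠ 0 := sub_ne_zero_of_G_pos (by simpa using hg)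
    have h1 : ContDiffAt ℝ (⊤ : ℕ∞) (fun q : EuclideanSpace ℝ (Fin n) × ℝ => q.1 - q.2 • a) p :=
      (contDiff_fst.sub (contDiff_snd.smul contDiff_const)).contDiffAt
    have h2 : ContDiffAt ℝ (⊤ : ℕ∞) (fun z : EuclideanSpace ℝ (Fin n) => c * ‖z‖ + ⟪a, z⟫)
        (p.1 - p.2 • a) := by
      refine ContDiffAt.add ?_ ?_
      · exact contDiffAt_const.mul (contDiffAt_norm ℝ hy)
      · exact (innerSL ℝ a).contDiff.contDiffAt
    have h3 : ContDiffAt ℝ (⊤ : ℕ∞) (fun s : ℝ => s ^ (-(1 / (1 - m))))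
        (c * ‖p.1 - p.2 • a‖ + ⟪a, p.1 - p.2 • a⟫) :=
      Real.contDiffAt_rpow_const_of_ne hg.ne'
    have h4 : ContDiffAt ℝ (⊤ : ℕ∞)
        (fun q : EuclideanSpace ℝ (Fin n) × ℝ =>
          (c * ‖q.1 - q.2 • a‖ + ⟪a, q.1 - q.2 • a⟫) ^ (-(1 / (1 - m)))) p :=
      by have := ContDiffAt.comp p h3 (ContDiffAt.comp p h2 h1); exact this
    exact (contDiffAt_const.mul h4).contDiffWithinAt
  · -- PDE
    intro x t hx
    have hg : 0 < c * ‖x - t • a‖ + ⟪a, x - t • a⟫ := (hreg x t).1 hx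
    have hy : x - t • a ≠ 0 := sub_ne_zero_of_G_pos hg
    have hr : (0:ℝ) < ‖x - t • a‖ := norm_pos_iff.2 hy
    have hfun : (fun τ => u x τ)
        = fun τ => A * (c * ‖x - τ • a‖ + ⟪a, x - τ • a⟫) ^ (-(1 / (1 - m))) :=
      funext fun τ => hu' x τ
    rw [hfun, deriv_time c (1 / (1 - m)) A a x t hca hg]
    have hum : (fun y => u y t ^ m)
        = fun y => A ^ m * (c * ‖y - t • a‖ + ⟪a, y - t • a⟫) ^ ((-(1 / (1 - m))) * m) := by
      funext y
      rw [hu' y t, Real.mul_rpow hApos.le (Real.rpow_nonneg (hGnn (y - t • a)) _),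
        ← Real.rpow_mul (hGnn (y - t • a))]
    rw [hum, lap_G_rpow c ((-(1 / (1 - m))) * m) (A ^ m) a (t • a) x hca hg]
    have hq1 : (-(1 / (1 - m))) * m - 1 = -(1 / (1 - m)) := by
      field_simp
      ring
    rw [hq1]
    have hsplitA : A ^ m * A ^ (1 - m) = A := by
      rw [← Real.rpow_add hApos, show m + (1 - m) = 1 from by ring, Real.rpow_one]
    have e1 : (-(1 / (1 - m))) * m * (2 * ((-(1 / (1 - m))) * m) + (n:ℝ) - 3)
        = (((n:ℝ) - 1) * m / (1 - m) * (m - ((n:ℝ) - 3) / ((n:ℝ) - 1))) * (1 / (1 - m)) := by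
      field_simp
      ring
    have key : A * (1 / (1 - m))
        = A ^ m * ((-(1 / (1 - m))) * m * (2 * ((-(1 / (1 - m))) * m) + (n:ℝ) - 3)) := by
      calc A * (1 / (1 - m)) = (A ^ m * A ^ (1 - m)) * (1 / (1 - m)) := by rw [hsplitA]
        _ = A ^ m * ((((n:ℝ) - 1) * m / (1 - m) * (m - ((n:ℝ) - 3) / ((n:ℝ) - 1)))
              * (1 / (1 - m))) := by rw [hA1m]; ring
        _ = A ^ m * ((-(1 / (1 - m))) * m * (2 * ((-(1 / (1 - m))) * m) + (n:ℝ) - 3)) := by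
              rw [e1]
    linear_combination ((c / ‖x - t • a‖)
      * (c * ‖x - t • a‖ + ⟪a, x - t • a⟫) ^ (-(1 / (1 - m)))) * key
  · -- blow-up
    intro t s₀ hs
    have hfun : (fun x => u x t)
        = fun x => A * (c * ‖x - t • a‖ + ⟪a, x - t • a⟫) ^ (-(1 / (1 - m))) :=
      funext fun x => hu' x t
    rw [hfun]
    have hG0 : c * ‖(s₀ • ω) - t • a‖ + ⟪a, (s₀ • ω) - t • a⟫ = 0 := by
      have hy : (s₀ • ω) - t • a = (s₀ - t * c) • ω := by
        rw [ha, smul_smul, ← sub_smul]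
      have hle : s₀ - t * c ≤ 0 := by rw [mul_comm t c]; linarith
      rw [hy, ha, norm_smul, real_inner_smul_left, real_inner_smul_right,
        real_inner_self_eq_norm_sq, hω, Real.norm_eq_abs, abs_of_nonpos hle]
      ring
    have h1 : Tendsto (fun x => c * ‖x - t • a‖ + ⟪a, x - t • a⟫)
        (nhdsWithin (s₀ • ω) {y | ¬ ∃ σ : ℝ, σ ≤ c * t ∧ y = σ • ω}) (nhdsWithin 0 (Ioi 0)) := by
      rw [tendsto_nhdsWithin_iff]
      constructor
      · have hcont := (G_continuous c a (t • a)).tendsto (s₀ • ω)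
        rw [hG0] at hcont
        exact hcont.mono_left nhdsWithin_le_nhds
      · exact eventually_nhdsWithin_of_forall fun x hx => mem_Ioi.mpr ((hreg x t).1 hx)
    have h2 : Tendsto (fun s : ℝ => A * s ^ (-(1 / (1 - m)))) (nhdsWithin 0 (Ioi 0)) atTop := by
      have hp : (0:ℝ) < 1 / (1 - m) := by positivity
      have ha2 : Tendsto (fun s : ℝ => s ^ (1 / (1 - m)))
          (nhdsWithin (0:ℝ) (Ioi 0)) (nhdsWithin (0:ℝ) (Ioi 0)) := by
        rw [tendsto_nhdsWithin_iff]
        constructor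
        · have hco := (Real.continuousAt_rpow_const 0 (1 / (1 - m)) (Or.inr hp.le)).tendsto
          rw [Real.zero_rpow hp.ne'] at hco
          exact hco.mono_left nhdsWithin_le_nhds
        · exact eventually_nhdsWithin_of_forall fun x hx =>
            mem_Ioi.mpr (Real.rpow_pos_of_pos hx _)
      have ha3 : Tendsto (fun s : ℝ => (s ^ (1 / (1 - m)))⁻¹)
          (nhdsWithin (0:ℝ) (Ioi 0)) atTop := tendsto_inv_nhdsGT_zero.comp ha2
      have ha4 : Tendsto (fun s : ℝ => s ^ (-(1 / (1 - m))))
          (nhdsWithin (0:ℝ) (Ioi 0)) atTop := by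
        refine ha3.congr' ?_
        filter_upwards [self_mem_nhdsWithin] with s hs
        rw [Real.rpow_neg (le_of_lt hs)]
      exact ha4.const_mul_atTop hApos
    exact h2.comp h1
end

section
/- Let n ≥ 2, m_* < m < 1, let a ∈ ℝⁿ be nonzero, let φ(y) := A·(|a|·|y| + a·y)^{−1/(1−m)} on ℝⁿ \ {−τ a/|a| : τ ≥ 0}, and let 0 < γ < 1. Then φ⁺ := (1+γ)·φ satisfies Δ((φ⁺)ᵐ)(y) + a·∇φ⁺(y) = ((1+γ)ᵐ − (1+γ))·Δ(φᵐ)(y) ≤ 0 at every point y of this set; that is, φ⁺ is a (stationary) supersolution of ∂ₜv = Δ(vᵐ) + a·∇v. -/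
/-!
Write `u z = ‖a‖ ‖z‖ + ⟪a, z⟫`, so that `φ = A u ^ p` with `p = -1/(1-m)`. Away from the ray
`u = 0`, the gradient `∇u = (‖a‖/‖z‖) z + a` satisfies `‖∇u‖² = 2 ⟪a, ∇u⟫ = 2 ‖a‖ u / ‖z‖` and
`Δu = (n-1) ‖a‖ / ‖z‖`, so the chain rule gives
`Δ(u ^ s) = s (2s + n - 3) (‖a‖/‖z‖) u ^ (s-1)` and `⟪a, ∇(u ^ s)⟫ = s (‖a‖/‖z‖) u ^ s`.
Taking `s = pm`, where `pm - 1 = p`, the value of `A` is exactly what makes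
`Δ(φ ^ m) = -⟪a, ∇φ⟫ = A/(1-m) (‖a‖/‖z‖) u ^ p ≥ 0`: `φ` is a stationary solution.
Multiplying `φ` by `c = 1 + γ` multiplies `Δ(φ ^ m)` by `c ^ m` and `⟪a, ∇φ⟫` by `c`,
and `c ^ m ≤ c` because `c ≥ 1 ≥ m`.
-/

open scoped RealInnerProductSpace
open Set

open Filter Topology Laplacian InnerProductSpace
open scoped Gradient

section Gradient

variable {E : Type*} [NormedAddCommGroup E] [InnerProductSpace ℝ E] [CompleteSpace E]

theorem hasGradientAt_norm_sq (x : E) : HasGradientAt (fun z : E => ‖z‖ ^ 2) ((2 : ℝ) • x) x := by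
  rw [hasGradientAt_iff_hasFDerivAt]
  refine (hasStrictFDerivAt_norm_sq x).hasFDerivAt.congr_fderiv ?_
  ext v
  simp

theorem hasGradientAt_norm {x : E} (hx : x ≠ 0) : HasGradientAt (‖·‖) (‖x‖⁻¹ • x) x := by
  have hsqrt := (hasGradientAt_iff_hasFDerivAt.mp (hasGradientAt_norm_sq x)).sqrt
    (pow_ne_zero 2 (norm_ne_zero_iff.mpr hx))
  simp only [Real.sqrt_sq (norm_nonneg _)] at hsqrt
  rw [hasGradientAt_iff_hasFDerivAt]
  refine hsqrt.congr_fderiv ?_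
  ext v
  simp
  field_simp

end Gradient

section Laplacian

variable {E : Type*} [NormedAddCommGroup E] [InnerProductSpace ℝ E] [FiniteDimensional ℝ E]

theorem laplacian_eq_sum_fderiv_fderiv {ι : Type*} [Fintype ι] (b : OrthonormalBasis ι ℝ E)
    (f : E → ℝ) (x : E) : Δ f x = ∑ i, fderiv ℝ (fderiv ℝ f) x (b i) (b i) := by
  simp [laplacian_eq_iteratedFDeriv_orthonormalBasis f b, iteratedFDeriv_two_apply]

theorem laplacian_comp {g g' : ℝ → ℝ} {g'' : ℝ} {u : E → ℝ} {x : E}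
    (hg : ∀ᶠ t in 𝓝 (u x), HasDerivAt g (g' t) t) (hg' : HasDerivAt g' g'' (u x))
    (hu : ContDiffAt ℝ 2 u x) :
    Δ (g ∘ u) x = g'' * ‖∇ u x‖ ^ 2 + g' (u x) * Δ u x := by
  have hu1 : ∀ᶠ z in 𝓝 x, HasFDerivAt u (fderiv ℝ u z) z :=
    (hu.eventually (by simp)).mono fun z hz => (hz.differentiableAt (by simp)).hasFDerivAt
  have hDgu : fderiv ℝ (g ∘ u) =ᶠ[𝓝 x] fun z => g' (u z) • fderiv ℝ u z := by
    filter_upwards [hu1, hu.continuousAt.tendsto.eventually hg] with z hu1z hgz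
    exact (hgz.comp_hasFDerivAt z hu1z).fderiv
  have hD2u : HasFDerivAt (fderiv ℝ u) (fderiv ℝ (fderiv ℝ u) x) x :=
    ((hu.fderiv_right (m := 1) (by norm_num)).differentiableAt one_ne_zero).hasFDerivAt
  have hD2gu : HasFDerivAt (fun z => g' (u z) • fderiv ℝ u z)
      (g' (u x) • fderiv ℝ (fderiv ℝ u) x + (g'' • fderiv ℝ u x).smulRight (fderiv ℝ u x)) x :=
    (hg'.comp_hasFDerivAt x hu1.self_of_nhds).smul hD2u
  set b := stdOrthonormalBasis ℝ E
  rw [laplacian_eq_sum_fderiv_fderiv b, laplacian_eq_sum_fderiv_fderiv b u, hDgu.fderiv_eq,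
    hD2gu.fderiv, ← b.sum_sq_inner_left, Finset.mul_sum, Finset.mul_sum, ← Finset.sum_add_distrib]
  refine Finset.sum_congr rfl fun i _ => ?_
  simp [inner_gradient_left]
  ring

theorem laplacian_const_mul_rpow_comp (C s : ℝ) {u : E → ℝ} {x : E} (hu : ContDiffAt ℝ 2 u x)
    (hux : 0 < u x) :
    Δ (fun z => C * u z ^ s) x
      = C * s * u x ^ (s - 2) * ((s - 1) * ‖∇ u x‖ ^ 2 + u x * Δ u x) := by
  have hg : ∀ᶠ t in 𝓝 (u x), HasDerivAt (fun t => C * t ^ s) (C * (s * t ^ (s - 1))) t :=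
    eventually_of_mem (Ioi_mem_nhds hux) fun t ht =>
      (Real.hasDerivAt_rpow_const (Or.inl (ne_of_gt ht))).const_mul C
  have hg' : HasDerivAt (fun t => C * (s * t ^ (s - 1)))
      (C * (s * ((s - 1) * u x ^ (s - 1 - 1)))) (u x) :=
    ((Real.hasDerivAt_rpow_const (Or.inl hux.ne')).const_mul s).const_mul C
  have hpow : u x ^ (s - 1) = u x ^ (s - 2) * u x := by
    rw [← Real.rpow_add_one hux.ne']; ring_nf
  rw [show (fun z => C * u z ^ s) = (fun t => C * t ^ s) ∘ u from rfl, laplacian_comp hg hg' hu,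
    hpow, show s - 1 - 1 = s - 2 by ring]
  ring

theorem laplacian_norm_sq (x : E) : Δ (fun z : E => ‖z‖ ^ 2) x = 2 * Module.finrank ℝ E := by
  set b := stdOrthonormalBasis ℝ E
  have hb (i) : ⟪b i, b i⟫ = 1 := by simp
  -- `fderiv_norm_sq` gives the derivative as the linear map `2 • innerSL ℝ`, so the Hessian is
  -- that map again
  rw [laplacian_eq_sum_fderiv_fderiv b, fderiv_norm_sq,
    show (2 • ⇑(innerSL ℝ) : E → E →L[ℝ] ℝ) = ⇑(2 • innerSL ℝ (E := E)) from rfl,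
    ContinuousLinearMap.fderiv]
  simp only [FunLike.coe_smul, Pi.smul_apply, nsmul_eq_mul, ← Finset.mul_sum]
  exact congrArg _ ((Finset.sum_congr rfl fun i _ => hb i).trans (by simp))

theorem laplacian_continuousLinearMap (L : E →L[ℝ] ℝ) (x : E) : Δ (⇑L) x = 0 := by
  rw [laplacian_eq_sum_fderiv_fderiv (stdOrthonormalBasis ℝ E),
    show fderiv ℝ (⇑L) = fun _ => L from funext fun _ => L.fderiv]
  simp

theorem laplacian_norm {x : E} (hx : x ≠ 0) :
    Δ (fun z : E => ‖z‖) x = (Module.finrank ℝ E - 1) / ‖x‖ := by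
  have hx' : 0 < ‖x‖ := norm_pos_iff.mpr hx
  have hnorm : (fun z : E => ‖z‖) = fun z : E => 1 * (‖z‖ ^ 2) ^ (1 / 2 : ℝ) :=
    funext fun z => by rw [one_mul, ← Real.sqrt_eq_rpow, Real.sqrt_sq (norm_nonneg z)]
  rw [hnorm, laplacian_const_mul_rpow_comp 1 _ (contDiff_norm_sq ℝ).contDiffAt (by positivity),
    laplacian_norm_sq, (hasGradientAt_norm_sq x).gradient, Real.rpow_sub (by positivity),
    ← Real.sqrt_eq_rpow, Real.sqrt_sq hx'.le, Real.rpow_two, norm_smul]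
  field_simp
  norm_num
  ring

end Laplacian

section ParabolicCoord

variable {E : Type*} [NormedAddCommGroup E] [InnerProductSpace ℝ E]

/-- Vanishes exactly on the ray `{-τ • a | τ ≥ 0}`; its level sets are paraboloids of revolution
around that ray. -/
def parabolicCoord (a z : E) : ℝ := ‖a‖ * ‖z‖ + ⟪a, z⟫

variable {x : E}

theorem parabolicCoord_nonneg (a z : E) : 0 ≤ parabolicCoord a z := by
  have := neg_le_of_abs_le (abs_real_inner_le_norm a z)
  unfold parabolicCoord
  linarith

theorem parabolicCoord_pos {a : E} (ha : a ≠ 0) (hx : ¬ ∃ τ : ℝ, 0 ≤ τ ∧ x = -(τ • (‖a‖⁻¹ • a))) :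
    0 < parabolicCoord a x := by
  refine (parabolicCoord_nonneg a x).lt_of_ne fun hzero => hx ⟨‖x‖, norm_nonneg x, ?_⟩
  have hinner : ⟪a, -x⟫ = ‖a‖ * ‖-x‖ := by
    rw [inner_neg_right, norm_neg]
    unfold parabolicCoord at hzero
    linarith
  rw [inner_eq_norm_mul_iff_real, norm_neg] at hinner
  rw [smul_comm, hinner, smul_smul, inv_mul_cancel₀ (norm_ne_zero_iff.mpr ha), one_smul, neg_neg]

theorem ne_zero_of_parabolicCoord_pos {a : E} (hx : 0 < parabolicCoord a x) : x ≠ 0 := by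
  rintro rfl
  simp [parabolicCoord] at hx

theorem contDiffAt_parabolicCoord (a : E) (hx : x ≠ 0) : ContDiffAt ℝ 2 (parabolicCoord a) x :=
  (contDiffAt_const.mul (contDiffAt_norm ℝ hx)).add (innerSL ℝ a).contDiff.contDiffAt

section Complete

variable [CompleteSpace E]

theorem hasGradientAt_parabolicCoord (a : E) (hx : x ≠ 0) :
    HasGradientAt (parabolicCoord a) ((‖a‖ / ‖x‖) • x + a) x := by
  rw [hasGradientAt_iff_hasFDerivAt]
  refine (((hasGradientAt_norm hx).hasFDerivAt.const_mul ‖a‖).add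
    (innerSL ℝ a).hasFDerivAt).congr_fderiv ?_
  ext v
  simp
  ring

theorem inner_gradient_parabolicCoord (a : E) (hx : x ≠ 0) :
    ⟪a, ∇ (parabolicCoord a) x⟫ = ‖a‖ / ‖x‖ * parabolicCoord a x := by
  have hx' : ‖x‖ ≠ 0 := norm_ne_zero_iff.mpr hx
  rw [(hasGradientAt_parabolicCoord a hx).gradient, inner_add_right, real_inner_smul_right,
    real_inner_self_eq_norm_sq, parabolicCoord]
  field_simp
  ring

theorem norm_gradient_parabolicCoord_sq (a : E) (hx : x ≠ 0) :
    ‖∇ (parabolicCoord a) x‖ ^ 2 = 2 * (‖a‖ / ‖x‖ * parabolicCoord a x) := by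
  have hx' : ‖x‖ ≠ 0 := norm_ne_zero_iff.mpr hx
  have hnorm : ‖(‖a‖ / ‖x‖) • x‖ = ‖a‖ := by
    rw [norm_smul, Real.norm_of_nonneg (by positivity)]
    field_simp
  rw [← inner_gradient_parabolicCoord a hx, (hasGradientAt_parabolicCoord a hx).gradient,
    norm_add_sq_real, hnorm, inner_add_right, real_inner_self_eq_norm_sq, real_inner_comm]
  ring

theorem inner_gradient_const_mul_parabolicCoord_rpow {a : E} (C s : ℝ)
    (hx : 0 < parabolicCoord a x) :
    ⟪a, ∇ (fun z => C * parabolicCoord a z ^ s) x⟫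
      = C * s * (‖a‖ / ‖x‖) * parabolicCoord a x ^ s := by
  have hx0 := ne_zero_of_parabolicCoord_pos hx
  have hf := ((Real.hasDerivAt_rpow_const (p := s) (Or.inl hx.ne')).const_mul C).comp_hasFDerivAt x
    (hasGradientAt_parabolicCoord a hx0).hasFDerivAt
  rw [real_inner_comm, inner_gradient_left, show (fun z => C * parabolicCoord a z ^ s)
    = (fun t => C * t ^ s) ∘ parabolicCoord a from rfl, hf.fderiv]
  have hpow : parabolicCoord a x ^ s = parabolicCoord a x ^ (s - 1) * parabolicCoord a x := by
    rw [← Real.rpow_add_one hx.ne']; ring_nf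
  have hgrad := inner_gradient_parabolicCoord a hx0
  rw [(hasGradientAt_parabolicCoord a hx0).gradient] at hgrad
  rw [smul_apply, toDual_apply_apply, real_inner_comm, hgrad, hpow, smul_eq_mul]
  ring

end Complete

variable [FiniteDimensional ℝ E]

theorem laplacian_parabolicCoord (a : E) (hx : x ≠ 0) :
    Δ (parabolicCoord a) x = ‖a‖ * (Module.finrank ℝ E - 1) / ‖x‖ := by
  have hsplit : parabolicCoord a = ‖a‖ • (fun z : E => ‖z‖) + ⇑(innerSL ℝ a) := by
    ext z; simp [parabolicCoord]
  have hnorm : ContDiffAt ℝ 2 (fun z : E => ‖z‖) x := contDiffAt_norm ℝ hx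
  have hnorm' : ContDiffAt ℝ 2 (‖a‖ • fun z : E => ‖z‖) x := hnorm.const_smul ‖a‖
  rw [hsplit, hnorm'.laplacian_add (innerSL ℝ a).contDiff.contDiffAt,
    laplacian_smul _ hnorm, laplacian_norm hx, laplacian_continuousLinearMap]
  simp only [smul_eq_mul, add_zero]
  ring

theorem laplacian_const_mul_parabolicCoord_rpow {a : E} (C s : ℝ) (hx : 0 < parabolicCoord a x) :
    Δ (fun z => C * parabolicCoord a z ^ s) x
      = C * s * (‖a‖ / ‖x‖) * parabolicCoord a x ^ (s - 1) * (2 * s + Module.finrank ℝ E - 3) := by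
  have hx0 := ne_zero_of_parabolicCoord_pos hx
  have hpow : parabolicCoord a x ^ (s - 1) = parabolicCoord a x ^ (s - 2) * parabolicCoord a x := by
    rw [← Real.rpow_add_one hx.ne']; ring_nf
  rw [laplacian_const_mul_rpow_comp C s (contDiffAt_parabolicCoord a hx0) hx,
    norm_gradient_parabolicCoord_sq a hx0, laplacian_parabolicCoord a hx0, hpow]
  have hx' : ‖x‖ ≠ 0 := norm_ne_zero_iff.mpr hx0
  field_simp
  ring

end ParabolicCoord

section Euclidean

variable {n : ℕ}

theorem lap_eq_laplacian (f : EuclideanSpace ℝ (Fin n) → ℝ) : lap f = Δ f := by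
  ext x
  simp [lap, laplacian_eq_iteratedFDeriv_orthonormalBasis f (EuclideanSpace.basisFun (Fin n) ℝ)]

theorem lap_rpow_const_mul_parabolicCoord_rpow {a y : EuclideanSpace ℝ (Fin n)} {C : ℝ}
    (hC : 0 ≤ C) (s m : ℝ) (hy : 0 < parabolicCoord a y) :
    lap (fun z => (C * parabolicCoord a z ^ s) ^ m) y
      = C ^ m * (s * m) * (‖a‖ / ‖y‖) * parabolicCoord a y ^ (s * m - 1)
        * (2 * (s * m) + n - 3) := by
  have hpow : (fun z => (C * parabolicCoord a z ^ s) ^ m)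
      = fun z => C ^ m * parabolicCoord a z ^ (s * m) := funext fun z => by
    rw [Real.mul_rpow hC (Real.rpow_nonneg (parabolicCoord_nonneg a z) _),
      ← Real.rpow_mul (parabolicCoord_nonneg a z)]
  rw [hpow, lap_eq_laplacian, laplacian_const_mul_parabolicCoord_rpow _ _ hy,
    finrank_euclideanSpace_fin]

end Euclidean

section Profile

noncomputable def profileConst (n : ℕ) (m : ℝ) : ℝ :=
  ((n : ℝ) - 1) * m / (1 - m) * (m - ((n : ℝ) - 3) / ((n : ℝ) - 1))

variable {n : ℕ} {m : ℝ}

theorem profileConst_nonneg (hn : 2 ≤ n) (hm : mstar n < m) (hm1 : m < 1) :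
    0 ≤ profileConst n m := by
  have hn1 : (1 : ℝ) ≤ (n : ℝ) - 1 := by
    have : (2 : ℝ) ≤ n := by exact_mod_cast hn
    linarith
  have hm0 : 0 ≤ m ∧ ((n : ℝ) - 3) / ((n : ℝ) - 1) ≤ m := by
    rcases hn.eq_or_lt with rfl | hn3
    · rw [mstar, if_pos rfl] at hm
      norm_num
      constructor <;> linarith
    · have hn3' : (3 : ℝ) ≤ n := by exact_mod_cast hn3
      rw [mstar, if_neg hn3.ne'] at hm
      exact ⟨(div_nonneg (by linarith) (by linarith)).trans hm.le, hm.le⟩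
  exact mul_nonneg (div_nonneg (mul_nonneg (by linarith) hm0.1) (by linarith))
    (sub_nonneg.mpr hm0.2)

theorem profileAmplitude_nonneg (hn : 2 ≤ n) (hm : mstar n < m) (hm1 : m < 1) {A : ℝ}
    (hA : A = profileConst n m ^ ((1 : ℝ) / (1 - m))) :
    0 ≤ A :=
  hA ▸ Real.rpow_nonneg (profileConst_nonneg hn hm hm1) _

/-- With `p = -1/(1-m)`, this is the condition `Δ(φ ^ m) + ⟪a, ∇φ⟫ = 0` on `φ = A u ^ p`,
after the common factor `(‖a‖/‖z‖) u ^ p` is cancelled. -/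
theorem profileAmplitude_equation (hn : 2 ≤ n) (hm : mstar n < m) (hm1 : m < 1) {A : ℝ}
    (hA : A = profileConst n m ^ ((1 : ℝ) / (1 - m))) :
    A ^ m * (-(1 / (1 - m)) * m) * (2 * (-(1 / (1 - m)) * m) + n - 3) = A / (1 - m) := by
  have hB := profileConst_nonneg hn hm hm1
  have hm1' : 1 - m ≠ 0 := by linarith
  have hn1 : (n : ℝ) - 1 ≠ 0 := by
    have : (2 : ℝ) ≤ n := by exact_mod_cast hn
    linarith
  have hA1 : A ^ (1 - m) = profileConst n m := by
    rw [hA, ← Real.rpow_mul hB, one_div_mul_cancel hm1', Real.rpow_one]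
  have hAA : A = A ^ m * A ^ (1 - m) := by
    rw [← Real.rpow_add' (profileAmplitude_nonneg hn hm hm1 hA) (by norm_num), add_sub_cancel,
      Real.rpow_one]
  conv_rhs => rw [hAA, hA1, profileConst]
  field_simp
  ring

theorem lap_rpow_profile (hn : 2 ≤ n) (hm : mstar n < m) (hm1 : m < 1) {A : ℝ}
    (hA : A = profileConst n m ^ ((1 : ℝ) / (1 - m)))
    {a y : EuclideanSpace ℝ (Fin n)} (hy : 0 < parabolicCoord a y) {C : ℝ} (hC : 0 ≤ C) :
    lap (fun z => (C * A * parabolicCoord a z ^ (-(1 / (1 - m)))) ^ m) y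
      = C ^ m * (A / (1 - m) * (‖a‖ / ‖y‖ * parabolicCoord a y ^ (-(1 / (1 - m))))) := by
  have hA0 := profileAmplitude_nonneg hn hm hm1 hA
  have hexp : -(1 / (1 - m)) * m - 1 = -(1 / (1 - m)) := by
    have : 1 - m ≠ 0 := by linarith
    field_simp
    ring
  rw [lap_rpow_const_mul_parabolicCoord_rpow (by positivity) _ _ hy, hexp, Real.mul_rpow hC hA0]
  linear_combination (C ^ m * (‖a‖ / ‖y‖ * parabolicCoord a y ^ (-(1 / (1 - m)))))
    * profileAmplitude_equation hn hm hm1 hA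

end Profile

theorem stmt_4_general (n : ℕ) (hn : 2 ≤ n) (m : ℝ) (hm : mstar n < m) (hm1 : m < 1)
    (a : EuclideanSpace ℝ (Fin n)) (ha : a ≠ 0)
    (A : ℝ)
    (hA : A = (((n : ℝ) - 1) * m / (1 - m) * (m - ((n : ℝ) - 3) / ((n : ℝ) - 1)))
        ^ ((1 : ℝ) / (1 - m)))
    (φ : EuclideanSpace ℝ (Fin n) → ℝ)
    (hφ : ∀ y, φ y = A * (‖a‖ * ‖y‖ + ⟪a, y⟫) ^ (-(1 / (1 - m))))
    (S : Set (EuclideanSpace ℝ (Fin n)))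
    (hS : S = {y | ¬ ∃ τ : ℝ, 0 ≤ τ ∧ y = -(τ • (‖a‖⁻¹ • a))})
    (γ : ℝ) (hγ0 : 0 < γ)
    (ψ : EuclideanSpace ℝ (Fin n) → ℝ)
    (hψ : ∀ y, ψ y = (1 + γ) * φ y) :
    ∀ y ∈ S,
      lap (fun z => ψ z ^ m) y + ⟪a, gradient ψ y⟫
        = ((1 + γ) ^ m - (1 + γ)) * lap (fun z => φ z ^ m) y ∧
      lap (fun z => ψ z ^ m) y + ⟪a, gradient ψ y⟫ ≤ 0 := by
  intro y hy
  rw [hS] at hy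
  have hy := parabolicCoord_pos ha hy
  have hφ' : φ = fun z => 1 * A * parabolicCoord a z ^ (-(1 / (1 - m))) :=
    funext fun z => by rw [hφ, one_mul]; rfl
  have hψ' : ψ = fun z => (1 + γ) * A * parabolicCoord a z ^ (-(1 / (1 - m))) :=
    funext fun z => by rw [hψ, hφ, mul_assoc]; rfl
  rw [hψ', hφ', lap_rpow_profile hn hm hm1 hA hy (by positivity),
    lap_rpow_profile hn hm hm1 hA hy zero_le_one, Real.one_rpow, one_mul,
    inner_gradient_const_mul_parabolicCoord_rpow _ _ hy]
  have hK : 0 ≤ A / (1 - m) * (‖a‖ / ‖y‖ * parabolicCoord a y ^ (-(1 / (1 - m)))) := by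
    have : 0 < 1 - m := by linarith
    have := profileAmplitude_nonneg hn hm hm1 hA
    positivity
  have hgrowth : (1 + γ) ^ m ≤ 1 + γ := Real.rpow_le_self_of_one_le (by linarith) hm1.le
  constructor
  · ring
  · linear_combination mul_le_mul_of_nonneg_right hgrowth hK

theorem stmt_4 (n : ℕ) (hn : 2 ≤ n) (m : ℝ) (hm : mstar n < m) (hm1 : m < 1)
    (a : EuclideanSpace ℝ (Fin n)) (ha : a ≠ 0)
    (A : ℝ)
    (hA : A = (((n : ℝ) - 1) * m / (1 - m) * (m - ((n : ℝ) - 3) / ((n : ℝ) - 1)))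
        ^ ((1 : ℝ) / (1 - m)))
    (φ : EuclideanSpace ℝ (Fin n) → ℝ)
    (hφ : ∀ y, φ y = A * (‖a‖ * ‖y‖ + ⟪a, y⟫) ^ (-(1 / (1 - m))))
    (S : Set (EuclideanSpace ℝ (Fin n)))
    (hS : S = {y | ¬ ∃ τ : ℝ, 0 ≤ τ ∧ y = -(τ • (‖a‖⁻¹ • a))})
    (γ : ℝ) (hγ0 : 0 < γ) (hγ1 : γ < 1)
    (ψ : EuclideanSpace ℝ (Fin n) → ℝ)
    (hψ : ∀ y, ψ y = (1 + γ) * φ y) :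
    ∀ y ∈ S,
      lap (fun z => ψ z ^ m) y + ⟪a, gradient ψ y⟫
        = ((1 + γ) ^ m - (1 + γ)) * lap (fun z => φ z ^ m) y ∧
      lap (fun z => ψ z ^ m) y + ⟪a, gradient ψ y⟫ ≤ 0 :=
  stmt_4_general n hn m hm hm1 a ha A hA φ hφ S hS γ hγ0 ψ hψ
end

section
/- Let ξ satisfy the curve condition, let 0 < r₀ < r̃₀, and assume the function x ↦ s(x) is differentiable on Γ_{r₀} \ Γ. Then for every x ∈ Γ_{r₀} \ Γ, ∇s(x) = ξ'(s(x)) / (1 − (x − ξ(s(x))) · ξ''(s(x))). -/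
open scoped RealInnerProductSpace
open Filter Topology Set

/-!
For `y` in the tube, `s y` minimises `σ ↦ ‖y - ξ σ‖`, so `⟪y - ξ (s y), ξ' (s y)⟫ = 0` on a
neighbourhood of `x`. Differentiating this identity at `x` and using `‖ξ'‖ = 1` gives
`Ds(x) v · (1 - ⟪x - ξ (s x), ξ'' (s x)⟫) = ⟪ξ' (s x), v⟫`, and the factor in brackets is positive
because `‖x - ξ (s x)‖ · ‖ξ''‖ < r̃₀ K < 1/2`.
-/

variable {E : Type*} [NormedAddCommGroup E]

theorem isMinOn_norm_sub_of_infDist_eq {ξ : ℝ → E} {y : E} {σ₀ : ℝ}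
    (h : Metric.infDist y (range ξ) = ‖y - ξ σ₀‖) : IsMinOn (fun σ => ‖y - ξ σ‖) univ σ₀ :=
  fun σ _ => by
    show ‖y - ξ σ₀‖ ≤ ‖y - ξ σ‖
    rw [← h, ← dist_eq_norm]
    exact Metric.infDist_le_dist_of_mem (mem_range_self σ)

variable [InnerProductSpace ℝ E]

theorem inner_sub_deriv_eq_zero_of_isLocalMin {ξ : ℝ → E} {y : E} {σ₀ : ℝ}
    (hmin : IsLocalMin (fun σ => ‖y - ξ σ‖) σ₀) (hξ : DifferentiableAt ℝ ξ σ₀) :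
    ⟪y - ξ σ₀, deriv ξ σ₀⟫ = 0 := by
  have hsq : IsLocalMin (fun σ => ‖y - ξ σ‖ ^ 2) σ₀ := by
    filter_upwards [hmin] with σ hσ using pow_le_pow_left₀ (norm_nonneg _) hσ 2
  have h := hsq.hasDerivAt_eq_zero (hξ.hasDerivAt.const_sub y).norm_sq
  simpa [inner_neg_right] using h

theorem fderiv_mul_one_sub_inner_eq {ξ : ℝ → E} {s : E → ℝ} {x : E}
    (hs : DifferentiableAt ℝ s x) (hξ : DifferentiableAt ℝ ξ (s x))
    (hξ' : DifferentiableAt ℝ (deriv ξ) (s x)) (hunit : ‖deriv ξ (s x)‖ = 1)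
    (horth : ∀ᶠ y in 𝓝 x, ⟪y - ξ (s y), deriv ξ (s y)⟫ = 0) (v : E) :
    fderiv ℝ s x v * (1 - ⟪x - ξ (s x), deriv (deriv ξ) (s x)⟫) = ⟪deriv ξ (s x), v⟫ := by
  have hF := ((hasFDerivAt_id x).sub (hξ.hasDerivAt.hasFDerivAt.comp x hs.hasFDerivAt)).inner ℝ
    (hξ'.hasDerivAt.hasFDerivAt.comp x hs.hasFDerivAt)
  have hzero := hF.unique ((hasFDerivAt_const (0 : ℝ) x).congr_of_eventuallyEq horth)
  have h := congrArg (· v) hzero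
  simp only [Pi.sub_apply, id_eq, Function.comp_apply, ContinuousLinearMap.comp_apply,
    ContinuousLinearMap.prod_apply, sub_apply, ContinuousLinearMap.id_apply,
    ContinuousLinearMap.toSpanSingleton_apply, fderivInnerCLM_apply, inner_sub_left,
    real_inner_smul_right, real_inner_smul_left, real_inner_self_eq_norm_sq, hunit, one_pow,
    mul_one, zero_apply, real_inner_comm (deriv ξ (s x)) v] at h
  rw [inner_sub_left]
  linear_combination -h

theorem hasGradientAt_of_inner_sub_deriv_eventually_eq_zero [CompleteSpace E]
    {ξ : ℝ → E} {s : E → ℝ} {x : E}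
    (hs : DifferentiableAt ℝ s x) (hξ : DifferentiableAt ℝ ξ (s x))
    (hξ' : DifferentiableAt ℝ (deriv ξ) (s x)) (hunit : ‖deriv ξ (s x)‖ = 1)
    (horth : ∀ᶠ y in 𝓝 x, ⟪y - ξ (s y), deriv ξ (s y)⟫ = 0)
    (hc : 1 - ⟪x - ξ (s x), deriv (deriv ξ) (s x)⟫ ≠ 0) :
    HasGradientAt s ((1 - ⟪x - ξ (s x), deriv (deriv ξ) (s x)⟫)⁻¹ • deriv ξ (s x)) x := by
  have hdual : InnerProductSpace.toDual ℝ E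
      ((1 - ⟪x - ξ (s x), deriv (deriv ξ) (s x)⟫)⁻¹ • deriv ξ (s x)) = fderiv ℝ s x := by
    ext v
    rw [InnerProductSpace.toDual_apply_apply, real_inner_smul_left,
      ← fderiv_mul_one_sub_inner_eq hs hξ hξ' hunit horth v]
    field_simp
  rw [hasGradientAt_iff_hasFDerivAt, hdual]
  exact hs.hasFDerivAt

theorem stmt_7_general (n : ℕ)
    (ξ : ℝ → EuclideanSpace ℝ (Fin n))
    (hξC3 : ContDiff ℝ 3 ξ)
    (hξ1 : ∀ σ : ℝ, ‖deriv ξ σ‖ = 1)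
    (K : ℝ)
    (hξ2 : ∀ σ : ℝ, ‖deriv (deriv ξ) σ‖ ≤ K)
    (r : EuclideanSpace ℝ (Fin n) → ℝ)
    (hrdef : ∀ x, r x = Metric.infDist x (Set.range ξ))
    (rt0 : ℝ) (hrt0 : 0 < rt0) (hrt0' : rt0 < (2 * K)⁻¹)
    (s : EuclideanSpace ℝ (Fin n) → ℝ)
    (hsdef : ∀ x, r x < rt0 →
      r x = ‖x - ξ (s x)‖ ∧ ∀ σ : ℝ, r x = ‖x - ξ σ‖ → σ = s x)
    (r₀ : ℝ) (hr₀' : r₀ < rt0)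
    (hsdiff : ∀ x : EuclideanSpace ℝ (Fin n), r x < r₀ → x ∉ Set.range ξ →
      DifferentiableAt ℝ s x) :
    ∀ x : EuclideanSpace ℝ (Fin n), r x < r₀ → x ∉ Set.range ξ →
      gradient s x
        = (1 - ⟪x - ξ (s x), deriv (deriv ξ) (s x)⟫)⁻¹ • deriv ξ (s x) := by
  intro x hx hxΓ
  have hξ : Differentiable ℝ ξ := hξC3.differentiable (by norm_num)
  have hξ' : Differentiable ℝ (deriv ξ) :=
    ((contDiff_succ_iff_deriv (n := 2)).mp hξC3).2.2.differentiable (by norm_num)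
  have horth : ∀ y, r y < rt0 → ⟪y - ξ (s y), deriv ξ (s y)⟫ = 0 := fun y hy =>
    inner_sub_deriv_eq_zero_of_isLocalMin
      ((isMinOn_norm_sub_of_infDist_eq (by rw [← hrdef, ← (hsdef y hy).1])).isLocalMin
        univ_mem) (hξ _)
  have htube : IsOpen {y | r y < rt0} := by
    simpa only [hrdef] using isOpen_lt (Metric.continuous_infDist_pt _) continuous_const
  have hK : 0 < 2 * K := inv_pos.mp (hrt0.trans hrt0')
  have hrt0K : rt0 * (2 * K) < 1 := by rw [← lt_div_iff₀ hK, one_div]; exact hrt0'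
  have hinner : ⟪x - ξ (s x), deriv (deriv ξ) (s x)⟫ ≤ rt0 * K :=
    calc ⟪x - ξ (s x), deriv (deriv ξ) (s x)⟫
        ≤ ‖x - ξ (s x)‖ * ‖deriv (deriv ξ) (s x)‖ := real_inner_le_norm _ _
      _ = r x * ‖deriv (deriv ξ) (s x)‖ := by rw [(hsdef x (hx.trans hr₀')).1]
      _ ≤ rt0 * K := mul_le_mul (hx.trans hr₀').le (hξ2 _) (norm_nonneg _) hrt0.le
  have hdenom : 0 < 1 - ⟪x - ξ (s x), deriv (deriv ξ) (s x)⟫ := by linarith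
  exact (hasGradientAt_of_inner_sub_deriv_eventually_eq_zero (hsdiff x hx hxΓ) (hξ _) (hξ' _)
    (hξ1 _) (eventually_of_mem (htube.mem_nhds (hx.trans hr₀')) horth) hdenom.ne').gradient

theorem stmt_7 (n : ℕ) (hn : 2 ≤ n)
    (ξ : ℝ → EuclideanSpace ℝ (Fin n))
    (hξC3 : ContDiff ℝ 3 ξ) (hξinj : Function.Injective ξ)
    (hξ1 : ∀ σ : ℝ, ‖deriv ξ σ‖ = 1)
    (K : ℝ) (hK : 1 < K)
    (hξ2 : ∀ σ : ℝ, ‖deriv (deriv ξ) σ‖ ≤ K)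
    (hξ3 : ∀ σ : ℝ, ‖deriv (deriv (deriv ξ)) σ‖ ≤ K)
    (r : EuclideanSpace ℝ (Fin n) → ℝ)
    (hrdef : ∀ x, r x = Metric.infDist x (Set.range ξ))
    (rt0 : ℝ) (hrt0 : 0 < rt0) (hrt0' : rt0 < (2 * K)⁻¹)
    (s : EuclideanSpace ℝ (Fin n) → ℝ)
    (hsdef : ∀ x, r x < rt0 →
      r x = ‖x - ξ (s x)‖ ∧ ∀ σ : ℝ, r x = ‖x - ξ σ‖ → σ = s x)
    (r₀ : ℝ) (hr₀ : 0 < r₀) (hr₀' : r₀ < rt0)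
    (hsdiff : ∀ x : EuclideanSpace ℝ (Fin n), r x < r₀ → x ∉ Set.range ξ →
      DifferentiableAt ℝ s x) :
    ∀ x : EuclideanSpace ℝ (Fin n), r x < r₀ → x ∉ Set.range ξ →
      gradient s x
        = (1 - ⟪x - ξ (s x), deriv (deriv ξ) (s x)⟫)⁻¹ • deriv ξ (s x) :=
  stmt_7_general n ξ hξC3 hξ1 K hξ2 r hrdef rt0 hrt0 hrt0' s hsdef r₀ hr₀' hsdiff
end

section
/- Let ξ satisfy the curve condition, let 0 < r₀ < r̃₀, and assume the functions x ↦ s(x) and x ↦ r(x) are differentiable on Γ_{r₀} \ Γ. Then for every x ∈ Γ_{r₀} \ Γ, ∇r(x) = (x − ξ(s(x))) / |x − ξ(s(x))|; in particular |∇r(x)| = 1 and ∇s(x) · ∇r(x) = 0. -/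
open scoped RealInnerProductSpace
open Filter Topology Set

/-!
Let `p = ξ(s(x))` be the nearest point and `u` the unit vector from `p` to `x`. On the segment
`x + t u`, `-|x - p| < t ≤ 0`, the point `p` stays nearest: `r` is `1`-Lipschitz and
`r(x + t u) ≤ |x + t u - p| = r(x) + t`, so `r(x + t u) = r(x) + t` and, by uniqueness,
`s(x + t u) = s(x)`. Differentiating from the left gives `∇r(x) · u = 1` and `∇s(x) · u = 0`, and
since `|∇r(x)| ≤ 1` the first identity forces `∇r(x) = u`.
-/

section NormedSpace

variable {E : Type*} [NormedAddCommGroup E] [NormedSpace ℝ E]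

lemma norm_add_smul_normalize_sub {x p : E} (hxp : x ≠ p) {t : ℝ} (ht : -‖x - p‖ ≤ t) :
    ‖x + t • (‖x - p‖⁻¹ • (x - p)) - p‖ = ‖x - p‖ + t := by
  have hpos : 0 < ‖x - p‖ := norm_pos_iff.mpr (sub_ne_zero.mpr hxp)
  have : x + t • (‖x - p‖⁻¹ • (x - p)) - p = ((‖x - p‖ + t) * ‖x - p‖⁻¹) • (x - p) := by
    rw [add_mul, mul_inv_cancel₀ hpos.ne', add_smul, one_smul, mul_smul]
    abel
  rw [this, norm_smul, Real.norm_eq_abs,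
    abs_of_nonneg (mul_nonneg (by linarith) (by positivity)), mul_assoc,
    inv_mul_cancel₀ hpos.ne', mul_one]

lemma infDist_add_smul_normalize_sub {S : Set E} {x p : E} (hp : p ∈ S) (hxp : x ≠ p)
    (hx : Metric.infDist x S = ‖x - p‖) {t : ℝ} (ht : -‖x - p‖ ≤ t) (ht0 : t ≤ 0) :
    Metric.infDist (x + t • (‖x - p‖⁻¹ • (x - p))) S = ‖x - p‖ + t := by
  set y := x + t • (‖x - p‖⁻¹ • (x - p))
  have hyp : ‖y - p‖ = ‖x - p‖ + t := norm_add_smul_normalize_sub hxp ht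
  have hxy : dist x y = -t := by
    have hpos : 0 < ‖x - p‖ := norm_pos_iff.mpr (sub_ne_zero.mpr hxp)
    rw [dist_self_add_right, norm_smul, norm_smul, norm_inv, norm_norm,
      inv_mul_cancel₀ hpos.ne', mul_one, Real.norm_eq_abs, abs_of_nonpos ht0]
  have hupper : Metric.infDist y S ≤ ‖y - p‖ := by
    rw [← dist_eq_norm]; exact Metric.infDist_le_dist_of_mem hp
  have hlower := Metric.infDist_le_infDist_add_dist (x := x) (y := y) (s := S)
  linarith

lemma fderiv_apply_eq_of_affine_on_Ioc {f : E → ℝ} {x v : E} (hf : DifferentiableAt ℝ f x)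
    {ε c : ℝ} (hε : 0 < ε)
    (h : ∀ t ∈ Ioc (-ε) 0, f (x + t • v) = f x + c * t) :
    fderiv ℝ f x v = c := by
  have hlefte : HasDerivWithinAt (fun t : ℝ => f (x + t • v)) (fderiv ℝ f x v) (Iic 0) 0 :=
    HasDerivAt.hasDerivWithinAt (hf.hasFDerivAt.hasLineDerivAt v)
  have hleft : HasDerivWithinAt (fun t : ℝ => f (x + t • v)) c (Iic 0) 0 := by
    have hmodel : HasDerivWithinAt (fun t : ℝ => f x + c * t) c (Iic 0) 0 := by
      simpa using ((hasDerivAt_id (0 : ℝ)).const_mul c).const_add (f x) |>.hasDerivWithinAt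
    refine hmodel.congr_of_eventuallyEq ?_ (by simp)
    filter_upwards [inter_mem_nhdsWithin (Iic (0 : ℝ)) (Ioi_mem_nhds (neg_lt_zero.mpr hε))]
      with t ⟨ht0, ht⟩
    exact h t ⟨ht, ht0⟩
  exact (uniqueDiffWithinAt_Iic 0).eq_deriv _ hlefte hleft

end NormedSpace

lemma gradient_eq_of_lipschitzWith_one {F : Type*} [NormedAddCommGroup F]
    [InnerProductSpace ℝ F] [CompleteSpace F] {f : F → ℝ} (hf : LipschitzWith 1 f) {x u : F}
    (hu : ‖u‖ = 1) (h : fderiv ℝ f x u = 1) : gradient f x = u := by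
  have hle : ‖gradient f x‖ ≤ 1 := by
    calc ‖gradient f x‖ = ‖fderiv ℝ f x‖ :=
          (InnerProductSpace.toDual ℝ F).symm.norm_map (fderiv ℝ f x)
      _ ≤ 1 := by simpa using norm_fderiv_le_of_lipschitz ℝ hf (x₀ := x)
  have hinner : ⟪gradient f x, u⟫ = 1 := by rw [inner_gradient_left, h]
  have hge : 1 ≤ ‖gradient f x‖ := by
    simpa [hinner, hu] using real_inner_le_norm (gradient f x) u
  exact (inner_eq_one_iff_of_norm_eq_one (le_antisymm hle hge) hu).mp hinner

theorem stmt_8_general (n : ℕ)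
    (ξ : ℝ → EuclideanSpace ℝ (Fin n))
    (r : EuclideanSpace ℝ (Fin n) → ℝ)
    (hrdef : ∀ x, r x = Metric.infDist x (Set.range ξ))
    (rt0 : ℝ)
    (s : EuclideanSpace ℝ (Fin n) → ℝ)
    (hsdef : ∀ x, r x < rt0 →
      r x = ‖x - ξ (s x)‖ ∧ ∀ σ : ℝ, r x = ‖x - ξ σ‖ → σ = s x)
    (r₀ : ℝ) (hr₀' : r₀ < rt0)
    (hsdiff : ∀ x : EuclideanSpace ℝ (Fin n), r x < r₀ → x ∉ Set.range ξ →
      DifferentiableAt ℝ s x)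
    (hrdiff : ∀ x : EuclideanSpace ℝ (Fin n), r x < r₀ → x ∉ Set.range ξ →
      DifferentiableAt ℝ r x) :
    ∀ x : EuclideanSpace ℝ (Fin n), r x < r₀ → x ∉ Set.range ξ →
      gradient r x = ‖x - ξ (s x)‖⁻¹ • (x - ξ (s x)) ∧
      ‖gradient r x‖ = 1 ∧
      ⟪gradient s x, gradient r x⟫ = 0 := by
  intro x hxr hxΓ
  set p := ξ (s x)
  set u := ‖x - p‖⁻¹ • (x - p)
  have hxp : x ≠ p := fun h => hxΓ ⟨s x, h.symm⟩
  have hu : ‖u‖ = 1 := norm_smul_inv_norm (sub_ne_zero.mpr hxp)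
  have hpos : 0 < ‖x - p‖ := norm_pos_iff.mpr (sub_ne_zero.mpr hxp)
  have hrx : r x = ‖x - p‖ := (hsdef x (hxr.trans hr₀')).1
  have hr_ray : ∀ t ∈ Ioc (-‖x - p‖) 0, r (x + t • u) = r x + 1 * t := fun t ht => by
    rw [hrdef, infDist_add_smul_normalize_sub (mem_range_self (s x)) hxp
      ((hrdef x).symm.trans hrx) ht.1.le ht.2, hrx, one_mul]
  have hs_ray : ∀ t ∈ Ioc (-‖x - p‖) 0, s (x + t • u) = s x + 0 * t := fun t ht => by
    have hry : r (x + t • u) = ‖x + t • u - p‖ := by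
      rw [hr_ray t ht, hrx, one_mul, norm_add_smul_normalize_sub hxp ht.1.le]
    have hry' : r (x + t • u) < rt0 := by linarith [hr_ray t ht, ht.2]
    rw [zero_mul, add_zero, ← (hsdef _ hry').2 (s x) hry]
  have hgrad : gradient r x = u :=
    gradient_eq_of_lipschitzWith_one (funext hrdef ▸ Metric.lipschitz_infDist_pt _) hu
      (fderiv_apply_eq_of_affine_on_Ioc (hrdiff x hxr hxΓ) hpos hr_ray)
  refine ⟨hgrad, hgrad ▸ hu, ?_⟩
  rw [hgrad, inner_gradient_left]
  exact fderiv_apply_eq_of_affine_on_Ioc (hsdiff x hxr hxΓ) hpos hs_ray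

theorem stmt_8 (n : ℕ) (hn : 2 ≤ n)
    (ξ : ℝ → EuclideanSpace ℝ (Fin n))
    (hξC3 : ContDiff ℝ 3 ξ) (hξinj : Function.Injective ξ)
    (hξ1 : ∀ σ : ℝ, ‖deriv ξ σ‖ = 1)
    (K : ℝ) (hK : 1 < K)
    (hξ2 : ∀ σ : ℝ, ‖deriv (deriv ξ) σ‖ ≤ K)
    (hξ3 : ∀ σ : ℝ, ‖deriv (deriv (deriv ξ)) σ‖ ≤ K)
    (r : EuclideanSpace ℝ (Fin n) → ℝ)
    (hrdef : ∀ x, r x = Metric.infDist x (Set.range ξ))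
    (rt0 : ℝ) (hrt0 : 0 < rt0) (hrt0' : rt0 < (2 * K)⁻¹)
    (s : EuclideanSpace ℝ (Fin n) → ℝ)
    (hsdef : ∀ x, r x < rt0 →
      r x = ‖x - ξ (s x)‖ ∧ ∀ σ : ℝ, r x = ‖x - ξ σ‖ → σ = s x)
    (r₀ : ℝ) (hr₀ : 0 < r₀) (hr₀' : r₀ < rt0)
    (hsdiff : ∀ x : EuclideanSpace ℝ (Fin n), r x < r₀ → x ∉ Set.range ξ →
      DifferentiableAt ℝ s x)
    (hrdiff : ∀ x : EuclideanSpace ℝ (Fin n), r x < r₀ → x ∉ Set.range ξ →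
      DifferentiableAt ℝ r x) :
    ∀ x : EuclideanSpace ℝ (Fin n), r x < r₀ → x ∉ Set.range ξ →
      gradient r x = ‖x - ξ (s x)‖⁻¹ • (x - ξ (s x)) ∧
      ‖gradient r x‖ = 1 ∧
      ⟪gradient s x, gradient r x⟫ = 0 :=
  stmt_8_general n ξ r hrdef rt0 s hsdef r₀ hr₀' hsdiff hrdiff
end

section
/- Let ξ satisfy the curve condition, let 0 < r₀ < r̃₀, and assume the function x ↦ s(x) is twice differentiable on Γ_{r₀} \ Γ. Then for every x ∈ Γ_{r₀} \ Γ, Δs(x) = (x − ξ(s(x))) · ξ'''(s(x)) / (1 − (x − ξ(s(x))) · ξ''(s(x)))³. -/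
/-!
At the foot point `ξ (s x)` the vector `x - ξ (s x)` is normal to the curve. Differentiating
this identity shows that the gradient of `s` is `ξ' (s x) / J x`, where
`J x = 1 - (x - ξ (s x)) · ξ'' (s x)` is `jacobianFactor ξ s x`. The Laplacian of `s` is the trace
of the derivative of this gradient field. Differentiating the factor `ξ' ∘ s` contributes
`ξ' · ξ'' / J² = 0`, and differentiating `1 / J` in the direction `ξ'` contributes
`(x - ξ (s x)) · ξ''' (s x) / J³`.
-/

open scoped RealInnerProductSpace
open Filter Topology Set

theorem HasDerivAt.comp_hasFDerivAt_smulRight {E F : Type*} [NormedAddCommGroup E]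
    [NormedSpace ℝ E] [NormedAddCommGroup F] [NormedSpace ℝ F] {γ : ℝ → F} {γ' : F}
    {s : E → ℝ} {s' : E →L[ℝ] ℝ} {x : E} (hγ : HasDerivAt γ γ' (s x)) (hs : HasFDerivAt s s' x) :
    HasFDerivAt (γ ∘ s) (s'.smulRight γ') x := by
  convert hγ.hasFDerivAt.comp x hs using 1
  ext h
  simp

section Curve

variable {E : Type*} [NormedAddCommGroup E] [InnerProductSpace ℝ E]

theorem inner_deriv_eq_zero_of_norm_eq_one {γ : ℝ → E} {t : ℝ} (hγ : DifferentiableAt ℝ γ t)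
    (h : ∀ σ, ‖γ σ‖ = 1) : ⟪γ t, deriv γ t⟫ = 0 := by
  have hconst : HasDerivAt (fun σ => ‖γ σ‖ ^ 2) 0 t := by
    simpa [h] using hasDerivAt_const t (1 : ℝ)
  have := hγ.hasDerivAt.norm_sq.unique hconst
  linarith

theorem inner_sub_deriv_eq_zero_of_forall_norm_le {γ : ℝ → E} {γ' x : E} {t : ℝ}
    (hγ : HasDerivAt γ γ' t) (hmin : ∀ σ, ‖x - γ t‖ ≤ ‖x - γ σ‖) : ⟪x - γ t, γ'⟫ = 0 := by
  have hloc : IsLocalMin (fun σ => ‖x - γ σ‖ ^ 2) t :=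
    Eventually.of_forall fun σ => pow_le_pow_left₀ (norm_nonneg _) (hmin σ) 2
  simpa [inner_neg_right] using hloc.hasDerivAt_eq_zero (hγ.const_sub x).norm_sq

end Curve

theorem lap_eq_trace_of_eventually_hasFDerivAt_innerSL {n : ℕ}
    {f : EuclideanSpace ℝ (Fin n) → ℝ} {V : EuclideanSpace ℝ (Fin n) → EuclideanSpace ℝ (Fin n)}
    {V' : EuclideanSpace ℝ (Fin n) →L[ℝ] EuclideanSpace ℝ (Fin n)} {x : EuclideanSpace ℝ (Fin n)}
    (hf : ∀ᶠ y in 𝓝 x, HasFDerivAt f (innerSL ℝ (V y)) y) (hV : HasFDerivAt V V' x) :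
    lap f x = LinearMap.trace ℝ _ (V' : EuclideanSpace ℝ (Fin n) →ₗ[ℝ] _) := by
  have hf' : fderiv ℝ f =ᶠ[𝓝 x] fun y => innerSL ℝ (V y) := hf.mono fun y hy => hy.fderiv
  have hff : fderiv ℝ (fderiv ℝ f) x = (innerSL ℝ : _ →L[ℝ] _ →L[ℝ] ℝ).comp V' :=
    (((innerSL ℝ : _ →L[ℝ] _ →L[ℝ] ℝ).hasFDerivAt.comp x hV).congr_of_eventuallyEq hf').fderiv
  rw [LinearMap.trace_eq_sum_inner _ (EuclideanSpace.basisFun (Fin n) ℝ), lap]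
  refine Finset.sum_congr rfl fun i _ => ?_
  simp [iteratedFDeriv_two_apply, hff, real_inner_comm]

section FootParameter

variable {E : Type*} [NormedAddCommGroup E] [InnerProductSpace ℝ E]
  {ξ : ℝ → E} {s : E → ℝ} {x : E}

noncomputable def jacobianFactor (ξ : ℝ → E) (s : E → ℝ) (x : E) : ℝ :=
  1 - ⟪x - ξ (s x), deriv (deriv ξ) (s x)⟫

theorem jacobianFactor_pos {K : ℝ} (hK : ∀ σ, ‖deriv (deriv ξ) σ‖ ≤ K)
    (hx : ‖x - ξ (s x)‖ < (2 * K)⁻¹) : 0 < jacobianFactor ξ s x := by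
  have hK0 : 0 < K := by
    have := inv_pos.mp ((norm_nonneg _).trans_lt hx)
    linarith
  have hbound : ⟪x - ξ (s x), deriv (deriv ξ) (s x)⟫ < 1 / 2 :=
    calc ⟪x - ξ (s x), deriv (deriv ξ) (s x)⟫
        ≤ ‖x - ξ (s x)‖ * ‖deriv (deriv ξ) (s x)‖ := real_inner_le_norm _ _
      _ ≤ ‖x - ξ (s x)‖ * K := by gcongr; exact hK _
      _ < (2 * K)⁻¹ * K := by gcongr
      _ = 1 / 2 := by field_simp
  rw [jacobianFactor]
  linarith

theorem hasFDerivAt_of_eventually_inner_sub_deriv_eq_zero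
    (hξ : DifferentiableAt ℝ ξ (s x)) (hξ' : DifferentiableAt ℝ (deriv ξ) (s x))
    (hs : DifferentiableAt ℝ s x) (hunit : ‖deriv ξ (s x)‖ = 1)
    (hJ : jacobianFactor ξ s x ≠ 0)
    (hnormal : ∀ᶠ y in 𝓝 x, ⟪y - ξ (s y), deriv ξ (s y)⟫ = 0) :
    HasFDerivAt s (innerSL ℝ ((jacobianFactor ξ s x)⁻¹ • deriv ξ (s x))) x := by
  have hF := ((hasFDerivAt_id x).sub
    (hξ.hasDerivAt.comp_hasFDerivAt_smulRight hs.hasFDerivAt)).inner ℝ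
    (hξ'.hasDerivAt.comp_hasFDerivAt_smulRight hs.hasFDerivAt)
  have hF0 := hF.unique ((hasFDerivAt_const 0 x).congr_of_eventuallyEq hnormal)
  convert hs.hasFDerivAt using 1
  ext h
  have h0 := congr($hF0 h)
  simp only [Pi.sub_apply, id_eq, Function.comp_apply, ContinuousLinearMap.comp_apply,
    ContinuousLinearMap.prod_apply, sub_apply, ContinuousLinearMap.id_apply,
    ContinuousLinearMap.smulRight_apply, fderivInnerCLM_apply, inner_smul_right, inner_sub_left,
    inner_smul_left, Real.ringHom_apply, inner_self_eq_norm_sq_to_K, hunit, one_pow, mul_one,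
    zero_apply] at h0
  rw [innerSL_apply_apply, real_inner_smul_left, inv_mul_eq_iff_eq_mul₀ hJ, jacobianFactor,
    inner_sub_left, real_inner_comm]
  linear_combination h0

theorem hasFDerivAt_jacobianFactor {s' : E →L[ℝ] ℝ}
    (hξ : DifferentiableAt ℝ ξ (s x)) (hξ'' : DifferentiableAt ℝ (deriv (deriv ξ)) (s x))
    (hs : HasFDerivAt s s' x) (horth : ⟪deriv ξ (s x), deriv (deriv ξ) (s x)⟫ = 0) :
    HasFDerivAt (jacobianFactor ξ s)
      (-innerSL ℝ (deriv (deriv ξ) (s x))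
        - ⟪x - ξ (s x), deriv (deriv (deriv ξ)) (s x)⟫ • s') x := by
  have hF := (hasFDerivAt_const (1 : ℝ) x).sub (((hasFDerivAt_id x).sub
    (hξ.hasDerivAt.comp_hasFDerivAt_smulRight hs)).inner ℝ
    (hξ''.hasDerivAt.comp_hasFDerivAt_smulRight hs))
  refine (hF : HasFDerivAt (jacobianFactor ξ s) _ x).congr_fderiv ?_
  ext h
  simp only [Pi.sub_apply, id_eq, Function.comp_apply, zero_sub,
    neg_apply, ContinuousLinearMap.comp_apply, ContinuousLinearMap.prod_apply,
    sub_apply, ContinuousLinearMap.id_apply,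
    ContinuousLinearMap.smulRight_apply, fderivInnerCLM_apply, inner_sub_left,
    real_inner_smul_left, real_inner_smul_right, horth, coe_innerSL_apply,
    smul_apply, smul_eq_mul, real_inner_comm h]
  ring

end FootParameter

theorem lap_eq_of_eventually_hasFDerivAt {n : ℕ} {ξ : ℝ → EuclideanSpace ℝ (Fin n)}
    {s : EuclideanSpace ℝ (Fin n) → ℝ} {x : EuclideanSpace ℝ (Fin n)}
    (hξ : DifferentiableAt ℝ ξ (s x)) (hξ' : DifferentiableAt ℝ (deriv ξ) (s x))
    (hξ'' : DifferentiableAt ℝ (deriv (deriv ξ)) (s x)) (hunit : ∀ σ, ‖deriv ξ σ‖ = 1)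
    (hgrad : ∀ᶠ y in 𝓝 x,
      HasFDerivAt s (innerSL ℝ ((jacobianFactor ξ s y)⁻¹ • deriv ξ (s y))) y)
    (hJ : jacobianFactor ξ s x ≠ 0) :
    lap s x = ⟪x - ξ (s x), deriv (deriv (deriv ξ)) (s x)⟫ / jacobianFactor ξ s x ^ 3 := by
  have horth := inner_deriv_eq_zero_of_norm_eq_one hξ' hunit
  have hs := hgrad.self_of_nhds
  have hinv := (hasDerivAt_inv hJ).comp_hasFDerivAt x (hasFDerivAt_jacobianFactor hξ hξ'' hs horth)
  have hW := hξ'.hasDerivAt.comp_hasFDerivAt_smulRight hs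
  rw [lap_eq_trace_of_eventually_hasFDerivAt_innerSL hgrad (hinv.smul hW)]
  simp only [Function.comp_apply, map_smul, real_inner_comm, neg_smul,
    ContinuousLinearMap.toLinearMap_add, ContinuousLinearMap.toLinearMap_smul,
    ContinuousLinearMap.coe_smulRight, ContinuousLinearMap.toLinearMap_innerSL_apply,
    ContinuousLinearMap.toLinearMap_neg, ContinuousLinearMap.toLinearMap_sub, map_add,
    LinearMap.trace_smulRight, LinearMap.smul_apply, innerₛₗ_apply_apply, horth, smul_eq_mul,
    mul_zero, LinearMap.neg_apply, LinearMap.sub_apply, neg_zero, inner_self_eq_norm_sq_to_K,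
    hunit, Real.ringHom_apply, one_pow, mul_one, zero_sub, mul_neg, neg_neg, zero_add]
  field_simp

theorem lap_eq_of_isOpen_of_forall_norm_le {n : ℕ} {ξ : ℝ → EuclideanSpace ℝ (Fin n)}
    {s : EuclideanSpace ℝ (Fin n) → ℝ} {U : Set (EuclideanSpace ℝ (Fin n))}
    {x : EuclideanSpace ℝ (Fin n)} (hξ : ContDiff ℝ 3 ξ) (hunit : ∀ σ, ‖deriv ξ σ‖ = 1)
    (hU : IsOpen U) (hxU : x ∈ U) (hs : ∀ y ∈ U, DifferentiableAt ℝ s y)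
    (hnear : ∀ y ∈ U, ∀ σ, ‖y - ξ (s y)‖ ≤ ‖y - ξ σ‖)
    (hJ : ∀ y ∈ U, jacobianFactor ξ s y ≠ 0) :
    lap s x = ⟪x - ξ (s x), deriv (deriv (deriv ξ)) (s x)⟫ / jacobianFactor ξ s x ^ 3 := by
  have hξ' : ContDiff ℝ 2 (deriv ξ) := hξ.deriv'
  have hξ'' : ContDiff ℝ 1 (deriv (deriv ξ)) := hξ'.deriv'
  have hd : Differentiable ℝ ξ := hξ.differentiable (by norm_num)
  have hd' : Differentiable ℝ (deriv ξ) := hξ'.differentiable (by norm_num)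
  have hnormal : ∀ y ∈ U, ⟪y - ξ (s y), deriv ξ (s y)⟫ = 0 := fun y hy =>
    inner_sub_deriv_eq_zero_of_forall_norm_le (hd (s y)).hasDerivAt (hnear y hy)
  have hgrad : ∀ y ∈ U,
      HasFDerivAt s (innerSL ℝ ((jacobianFactor ξ s y)⁻¹ • deriv ξ (s y))) y := fun y hy =>
    hasFDerivAt_of_eventually_inner_sub_deriv_eq_zero (hd _) (hd' _) (hs y hy) (hunit _) (hJ y hy)
      (eventually_of_mem (hU.mem_nhds hy) hnormal)
  exact lap_eq_of_eventually_hasFDerivAt (hd _) (hd' _) (hξ''.differentiable one_ne_zero _) hunit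
    (eventually_of_mem (hU.mem_nhds hxU) hgrad) (hJ x hxU)

theorem stmt_9_general (n : ℕ)
    (ξ : ℝ → EuclideanSpace ℝ (Fin n))
    (hξC3 : ContDiff ℝ 3 ξ)
    (hξ1 : ∀ σ : ℝ, ‖deriv ξ σ‖ = 1)
    (K : ℝ)
    (hξ2 : ∀ σ : ℝ, ‖deriv (deriv ξ) σ‖ ≤ K)
    (r : EuclideanSpace ℝ (Fin n) → ℝ)
    (hrdef : ∀ x, r x = Metric.infDist x (Set.range ξ))
    (rt0 : ℝ) (hrt0' : rt0 < (2 * K)⁻¹)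
    (s : EuclideanSpace ℝ (Fin n) → ℝ)
    (hsdef : ∀ x, r x < rt0 →
      r x = ‖x - ξ (s x)‖ ∧ ∀ σ : ℝ, r x = ‖x - ξ σ‖ → σ = s x)
    (r₀ : ℝ) (hr₀' : r₀ < rt0)
    (hsdiff : ∀ x : EuclideanSpace ℝ (Fin n), r x < r₀ → x ∉ Set.range ξ →
      ContDiffAt ℝ 2 s x) :
    ∀ x : EuclideanSpace ℝ (Fin n), r x < r₀ → x ∉ Set.range ξ →
      lap s x = ⟪x - ξ (s x), deriv (deriv (deriv ξ)) (s x)⟫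
        / (1 - ⟪x - ξ (s x), deriv (deriv ξ) (s x)⟫) ^ 3 := by
  intro x hx hxξ
  have hr_le : ∀ y σ, r y ≤ ‖y - ξ σ‖ := fun y σ => by
    rw [hrdef, ← dist_eq_norm]
    exact Metric.infDist_le_dist_of_mem ⟨σ, rfl⟩
  have hfoot : ∀ y, r y < r₀ → ‖y - ξ (s y)‖ = r y := fun y hy =>
    (hsdef y (hy.trans hr₀')).1.symm
  have hU : IsOpen {y | 0 < r y ∧ r y < r₀} :=
    isOpen_Ioo.preimage (funext hrdef ▸ Metric.continuous_infDist_pt _)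
  have hxU : 0 < r x ∧ r x < r₀ := by
    refine ⟨(hrdef x ▸ Metric.infDist_nonneg).lt_of_ne fun h0 => hxξ ⟨s x, ?_⟩, hx⟩
    rw [eq_comm, ← sub_eq_zero, ← norm_eq_zero, hfoot x hx, h0]
  refine lap_eq_of_isOpen_of_forall_norm_le hξC3 hξ1 hU hxU (fun y hy => ?_)
    (fun y hy σ => (hfoot y hy.2).trans_le (hr_le y σ))
    (fun y hy => (jacobianFactor_pos hξ2
      ((hfoot y hy.2).trans_lt (hy.2.trans hr₀') |>.trans hrt0')).ne')
  refine (hsdiff y hy.2 ?_).differentiableAt (by norm_num)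
  rintro ⟨σ, rfl⟩
  simpa using (hr_le (ξ σ) σ).trans_lt' hy.1

theorem stmt_9 (n : ℕ) (hn : 2 ≤ n)
    (ξ : ℝ → EuclideanSpace ℝ (Fin n))
    (hξC3 : ContDiff ℝ 3 ξ) (hξinj : Function.Injective ξ)
    (hξ1 : ∀ σ : ℝ, ‖deriv ξ σ‖ = 1)
    (K : ℝ) (hK : 1 < K)
    (hξ2 : ∀ σ : ℝ, ‖deriv (deriv ξ) σ‖ ≤ K)
    (hξ3 : ∀ σ : ℝ, ‖deriv (deriv (deriv ξ)) σ‖ ≤ K)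
    (r : EuclideanSpace ℝ (Fin n) → ℝ)
    (hrdef : ∀ x, r x = Metric.infDist x (Set.range ξ))
    (rt0 : ℝ) (hrt0 : 0 < rt0) (hrt0' : rt0 < (2 * K)⁻¹)
    (s : EuclideanSpace ℝ (Fin n) → ℝ)
    (hsdef : ∀ x, r x < rt0 →
      r x = ‖x - ξ (s x)‖ ∧ ∀ σ : ℝ, r x = ‖x - ξ σ‖ → σ = s x)
    (r₀ : ℝ) (hr₀ : 0 < r₀) (hr₀' : r₀ < rt0)
    (hsdiff : ∀ x : EuclideanSpace ℝ (Fin n), r x < r₀ → x ∉ Set.range ξ →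
      ContDiffAt ℝ 2 s x) :
    ∀ x : EuclideanSpace ℝ (Fin n), r x < r₀ → x ∉ Set.range ξ →
      lap s x = ⟪x - ξ (s x), deriv (deriv (deriv ξ)) (s x)⟫
        / (1 - ⟪x - ξ (s x), deriv (deriv ξ) (s x)⟫) ^ 3 :=
  stmt_9_general n ξ hξC3 hξ1 K hξ2 r hrdef rt0 hrt0' s hsdef r₀ hr₀' hsdiff
end

section
/- Let ξ satisfy the curve condition, let m_* < m < 1 and c > 0, and let 0 < r₀ < r̃₀ with r₀ ≤ 1. Let ζ : ℝ → ℝ be any function with 0 ≤ ζ ≤ 1, ζ(σ) = 1 for σ ≤ −2 and ζ(σ) = 0 for σ ≥ −1, and let M satisfy M > max{ 3^{m/(1−m)}·Aᵐ·c^{−m/(1−m)}·r₀^{−2m/(1−m)}, 10^{m/(1−m)}·Aᵐ·c^{−m/(1−m)}·r₀^{−2m/(1−m)} }. Then for every x ∈ ℝⁿ with r(x) = r₀ and every t ∈ ℝ (with σ = σ(x,t)), U(x,t)ᵐ − M − M·|σ|^{m/(1−m)}·ζ(σ) ≤ 0; consequently the function u⁻(x,t) := (1−ε')·[U(x,t)ᵐ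 − M − M·|σ|^{m/(1−m)}·ζ(σ)]₊^{1/m} vanishes whenever r(x) = r₀ (for any 0 < ε' < 1). -/
open scoped RealInnerProductSpace
open Filter Topology Set

/-! On the tube `r = r₀`, write `R = √(r₀² + σ²)`. Since `(R + σ)(R - σ) = r₀²`, the power
`Uᵐ` equals `Aᵐ c^{-θ} r₀^{-2θ} (R - σ)^θ` with `θ = m/(1-m)`. Moreover `R - σ ≤ r₀ + |σ| - σ`,
which is at most `5 ≤ 10` for `σ ≥ -2` and at most `3|σ|` for `σ ≤ -2`, where `ζ(σ) = 1`;
the choice of `M` absorbs both bounds. -/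

/-- With `n = 0` the junk value `(0 - 3)/(0 - 1) = 3` makes `mstar 0` positive as well. -/
lemma mstar_nonneg (n : ℕ) : 0 ≤ mstar n := by
  unfold mstar
  split_ifs with h
  · exact le_rfl
  · rcases Nat.lt_or_ge n 2 with hn | hn
    · interval_cases n <;> norm_num
    · have hn' : (3 : ℝ) ≤ n := by exact_mod_cast (show 3 ≤ n by omega)
      exact div_nonneg (by linarith) (by linarith)

lemma profile_base_nonneg {n : ℕ} {m : ℝ} (hm : mstar n < m) (hm1 : m < 1) :
    0 ≤ ((n : ℝ) - 1) * m / (1 - m) * (m - ((n : ℝ) - 3) / ((n : ℝ) - 1)) := by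
  have hm0 : 0 < m := (mstar_nonneg n).trans_lt hm
  rcases Nat.eq_zero_or_pos n with rfl | hn
  · norm_num [mstar] at hm; linarith
  have hn1 : (1 : ℝ) ≤ n := by exact_mod_cast hn
  have hle : ((n : ℝ) - 3) / ((n : ℝ) - 1) ≤ mstar n := by
    unfold mstar
    split_ifs with h
    · subst h; norm_num
    · exact le_rfl
  exact mul_nonneg (div_nonneg (by nlinarith) (by linarith)) (by linarith)

section Profile

variable {a : ℝ} (σ : ℝ)

lemma sqrt_sq_add_sq_sub_pos (ha : a ≠ 0) : 0 < √(a ^ 2 + σ ^ 2) - σ := by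
  have : |σ| < √(a ^ 2 + σ ^ 2) :=
    (Real.lt_sqrt (abs_nonneg σ)).2 (by rw [sq_abs]; nlinarith [sq_pos_of_ne_zero ha])
  linarith [le_abs_self σ]

lemma sqrt_sq_add_sq_sub_le (ha : 0 ≤ a) : √(a ^ 2 + σ ^ 2) - σ ≤ a + |σ| - σ := by
  have : √(a ^ 2 + σ ^ 2) ≤ a + |σ| :=
    Real.sqrt_le_iff.2 ⟨by positivity, by nlinarith [sq_abs σ, abs_nonneg σ]⟩
  linarith

lemma rpow_neg_sqrt_sq_add_sq_add (ha : 0 < a) (p : ℝ) :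
    (√(a ^ 2 + σ ^ 2) + σ) ^ (-p) = a ^ (-(2 * p)) * (√(a ^ 2 + σ ^ 2) - σ) ^ p := by
  have hsub := sqrt_sq_add_sq_sub_pos σ ha.ne'
  have hR : √(a ^ 2 + σ ^ 2) ^ 2 = a ^ 2 + σ ^ 2 := Real.sq_sqrt (by positivity)
  have hadd : √(a ^ 2 + σ ^ 2) + σ = a ^ 2 / (√(a ^ 2 + σ ^ 2) - σ) := by
    rw [eq_div_iff hsub.ne']; linear_combination hR
  rw [hadd, Real.div_rpow (by positivity) hsub.le, Real.rpow_neg hsub.le, div_inv_eq_mul,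
    ← Real.rpow_natCast, ← Real.rpow_mul ha.le]
  push_cast; ring_nf

end Profile

lemma rpow_profile_on_tube {A c a : ℝ} (hA : 0 ≤ A) (hc : 0 < c) (ha : 0 < a) (m σ : ℝ) :
    (A * c ^ (-(1 / (1 - m))) * (√(a ^ 2 + σ ^ 2) + σ) ^ (-(1 / (1 - m)))) ^ m
      = A ^ m * c ^ (-(m / (1 - m))) * a ^ (-(2 * m / (1 - m)))
        * (√(a ^ 2 + σ ^ 2) - σ) ^ (m / (1 - m)) := by
  have hsub := sqrt_sq_add_sq_sub_pos σ ha.ne'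
  rw [rpow_neg_sqrt_sq_add_sq_add σ ha, Real.mul_rpow (by positivity) (by positivity),
    Real.mul_rpow hA (by positivity), Real.mul_rpow (by positivity) (by positivity),
    ← Real.rpow_mul hc.le, ← Real.rpow_mul ha.le, ← Real.rpow_mul hsub.le]
  ring_nf

section TubeBounds

variable {a σ θ : ℝ}

lemma rpow_sqrt_sq_add_sq_sub_le_ten (ha : 0 < a) (ha1 : a ≤ 1) (hθ : 0 ≤ θ) (hσ : -2 ≤ σ) :
    (√(a ^ 2 + σ ^ 2) - σ) ^ θ ≤ 10 ^ θ := by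
  refine Real.rpow_le_rpow (sqrt_sq_add_sq_sub_pos σ ha.ne').le ?_ hθ
  have := sqrt_sq_add_sq_sub_le σ ha.le
  cases abs_cases σ <;> linarith

lemma rpow_sqrt_sq_add_sq_sub_le_three_mul (ha : 0 < a) (ha1 : a ≤ 1) (hθ : 0 ≤ θ)
    (hσ : σ ≤ -2) :
    (√(a ^ 2 + σ ^ 2) - σ) ^ θ ≤ 3 ^ θ * |σ| ^ θ := by
  rw [← Real.mul_rpow (by norm_num) (abs_nonneg σ)]
  refine Real.rpow_le_rpow (sqrt_sq_add_sq_sub_pos σ ha.ne').le ?_ hθ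
  have := sqrt_sq_add_sq_sub_le σ ha.le
  rw [abs_of_neg (by linarith)] at this ⊢
  linarith

lemma mul_rpow_sqrt_sq_add_sq_sub_le {C M z : ℝ} (ha : 0 < a) (ha1 : a ≤ 1) (hθ : 0 ≤ θ)
    (hC : 0 ≤ C) (hM3 : 3 ^ θ * C ≤ M) (hM10 : 10 ^ θ * C ≤ M) (hz : 0 ≤ z)
    (hz1 : σ ≤ -2 → z = 1) :
    C * (√(a ^ 2 + σ ^ 2) - σ) ^ θ ≤ M + M * |σ| ^ θ * z := by
  have hM : 0 ≤ M := (by positivity : (0 : ℝ) ≤ 3 ^ θ * C).trans hM3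
  have hσθ : 0 ≤ |σ| ^ θ := Real.rpow_nonneg (abs_nonneg σ) θ
  rcases le_or_gt (-2) σ with hσ | hσ
  · calc C * (√(a ^ 2 + σ ^ 2) - σ) ^ θ ≤ C * 10 ^ θ :=
          mul_le_mul_of_nonneg_left (rpow_sqrt_sq_add_sq_sub_le_ten ha ha1 hθ hσ) hC
      _ ≤ M := by linarith
      _ ≤ M + M * |σ| ^ θ * z := le_add_of_nonneg_right (by positivity)
  · calc C * (√(a ^ 2 + σ ^ 2) - σ) ^ θ ≤ C * (3 ^ θ * |σ| ^ θ) :=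
          mul_le_mul_of_nonneg_left (rpow_sqrt_sq_add_sq_sub_le_three_mul ha ha1 hθ hσ.le) hC
      _ ≤ M * |σ| ^ θ := by nlinarith
      _ ≤ M + M * |σ| ^ θ * z := by rw [hz1 hσ.le]; linarith

end TubeBounds

theorem stmt_14_general (n : ℕ)
    (m : ℝ) (hm : mstar n < m) (hm1 : m < 1) (c : ℝ) (hc : 0 < c)
    (r : EuclideanSpace ℝ (Fin n) → ℝ)
    (s : EuclideanSpace ℝ (Fin n) → ℝ)
    (A : ℝ)
    (hA : A = (((n : ℝ) - 1) * m / (1 - m) * (m - ((n : ℝ) - 3) / ((n : ℝ) - 1)))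
        ^ ((1 : ℝ) / (1 - m)))
    (U : EuclideanSpace ℝ (Fin n) → ℝ → ℝ)
    (hU : ∀ x t, U x t = A * c ^ (-(1 / (1 - m)))
        * (Real.sqrt (r x ^ 2 + (s x - c * t) ^ 2) + (s x - c * t)) ^ (-(1 / (1 - m))))
    (r₀ : ℝ) (hr₀ : 0 < r₀) (hr₀1 : r₀ ≤ 1)
    (ζ : ℝ → ℝ) (hζ01 : ∀ σ : ℝ, 0 ≤ ζ σ ∧ ζ σ ≤ 1)
    (hζ1 : ∀ σ : ℝ, σ ≤ -2 → ζ σ = 1)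
    (M : ℝ)
    (hM : M > max ((3 : ℝ) ^ (m / (1 - m)) * A ^ m * c ^ (-(m / (1 - m)))
        * r₀ ^ (-(2 * m / (1 - m))))
      ((10 : ℝ) ^ (m / (1 - m)) * A ^ m * c ^ (-(m / (1 - m)))
        * r₀ ^ (-(2 * m / (1 - m))))) :
    ∀ (x : EuclideanSpace ℝ (Fin n)) (t : ℝ), r x = r₀ →
      U x t ^ m - M - M * |s x - c * t| ^ (m / (1 - m)) * ζ (s x - c * t) ≤ 0 ∧
      ∀ ε' : ℝ, 0 < ε' → ε' < 1 →
        (1 - ε') * (max (U x t ^ m - M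
          - M * |s x - c * t| ^ (m / (1 - m)) * ζ (s x - c * t)) 0) ^ (1 / m) = 0 := by
  intro x t hrx
  set σ := s x - c * t
  set θ := m / (1 - m)
  have hm0 : 0 < m := (mstar_nonneg n).trans_lt hm
  have hθ : 0 ≤ θ := div_nonneg hm0.le (by linarith)
  have hA0 : 0 ≤ A := hA ▸ Real.rpow_nonneg (profile_base_nonneg hm hm1) _
  set C := A ^ m * c ^ (-θ) * r₀ ^ (-(2 * m / (1 - m)))
  have hC : 0 ≤ C := by positivity
  have hUm : U x t ^ m = C * (√(r₀ ^ 2 + σ ^ 2) - σ) ^ θ := by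
    rw [hU, hrx, rpow_profile_on_tube hA0 hc hr₀]
  have hM3 : 3 ^ θ * C ≤ M := by
    have := (le_max_left _ _).trans_lt hM; simp only [C]; linarith
  have hM10 : 10 ^ θ * C ≤ M := by
    have := (le_max_right _ _).trans_lt hM; simp only [C]; linarith
  have hbound : U x t ^ m ≤ M + M * |σ| ^ θ * ζ σ := hUm ▸
    mul_rpow_sqrt_sq_add_sq_sub_le hr₀ hr₀1 hθ hC hM3 hM10 (hζ01 σ).1 (hζ1 σ)
  refine ⟨by linarith, fun ε' _ _ => ?_⟩
  rw [max_eq_right (by linarith), Real.zero_rpow (one_div_ne_zero hm0.ne'), mul_zero]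

theorem stmt_14 (n : ℕ) (hn : 2 ≤ n)
    (m : ℝ) (hm : mstar n < m) (hm1 : m < 1) (c : ℝ) (hc : 0 < c)
    (ξ : ℝ → EuclideanSpace ℝ (Fin n))
    (hξC3 : ContDiff ℝ 3 ξ) (hξinj : Function.Injective ξ)
    (hξ1 : ∀ σ : ℝ, ‖deriv ξ σ‖ = 1)
    (K : ℝ) (hK : 1 < K)
    (hξ2 : ∀ σ : ℝ, ‖deriv (deriv ξ) σ‖ ≤ K)
    (hξ3 : ∀ σ : ℝ, ‖deriv (deriv (deriv ξ)) σ‖ ≤ K)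
    (r : EuclideanSpace ℝ (Fin n) → ℝ)
    (hrdef : ∀ x, r x = Metric.infDist x (Set.range ξ))
    (rt0 : ℝ) (hrt0 : 0 < rt0) (hrt0' : rt0 < (2 * K)⁻¹)
    (s : EuclideanSpace ℝ (Fin n) → ℝ)
    (hsdef : ∀ x, r x < rt0 →
      r x = ‖x - ξ (s x)‖ ∧ ∀ σ : ℝ, r x = ‖x - ξ σ‖ → σ = s x)
    (A : ℝ)
    (hA : A = (((n : ℝ) - 1) * m / (1 - m) * (m - ((n : ℝ) - 3) / ((n : ℝ) - 1)))
        ^ ((1 : ℝ) / (1 - m)))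
    (U : EuclideanSpace ℝ (Fin n) → ℝ → ℝ)
    (hU : ∀ x t, U x t = A * c ^ (-(1 / (1 - m)))
        * (Real.sqrt (r x ^ 2 + (s x - c * t) ^ 2) + (s x - c * t)) ^ (-(1 / (1 - m))))
    (r₀ : ℝ) (hr₀ : 0 < r₀) (hr₀' : r₀ < rt0) (hr₀1 : r₀ ≤ 1)
    (ζ : ℝ → ℝ) (hζ01 : ∀ σ : ℝ, 0 ≤ ζ σ ∧ ζ σ ≤ 1)
    (hζ1 : ∀ σ : ℝ, σ ≤ -2 → ζ σ = 1) (hζ0 : ∀ σ : ℝ, -1 ≤ σ → ζ σ = 0)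
    (M : ℝ)
    (hM : M > max ((3 : ℝ) ^ (m / (1 - m)) * A ^ m * c ^ (-(m / (1 - m)))
        * r₀ ^ (-(2 * m / (1 - m))))
      ((10 : ℝ) ^ (m / (1 - m)) * A ^ m * c ^ (-(m / (1 - m)))
        * r₀ ^ (-(2 * m / (1 - m))))) :
    ∀ (x : EuclideanSpace ℝ (Fin n)) (t : ℝ), r x = r₀ →
      U x t ^ m - M - M * |s x - c * t| ^ (m / (1 - m)) * ζ (s x - c * t) ≤ 0 ∧
      ∀ ε' : ℝ, 0 < ε' → ε' < 1 →
        (1 - ε') * (max (U x t ^ m - M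
          - M * |s x - c * t| ^ (m / (1 - m)) * ζ (s x - c * t)) 0) ^ (1 / m) = 0 :=
  stmt_14_general n m hm hm1 c hc r s A hA U hU r₀ hr₀ hr₀1 ζ hζ01 hζ1 M hM
end

section
/- Let 0 < r₁ < r₂ and define, for r₁ < ρ < r₂, Φ(ρ) := exp(−1/(r₂ − ρ)), Ψ(ρ) := exp(−1/(ρ − r₁)) and η(ρ) := Φ(ρ)/(Φ(ρ) + Ψ(ρ)). Then η is smooth on (r₁, r₂) with η' < 0, and lim_{ρ → r₂⁻} η(ρ)/η''(ρ) = 0 and lim_{ρ → r₂⁻} |η'(ρ)|/η''(ρ) = 0 (in particular η''(ρ) > 0 for ρ sufficiently close to r₂). -/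
set_option maxHeartbeats 1000000

open Filter Topology Set Real

namespace Stmt17

noncomputable def g (r₁ r₂ x : ℝ) : ℝ := (r₂ - x)⁻¹ - (x - r₁)⁻¹
noncomputable def g1 (r₁ r₂ x : ℝ) : ℝ := ((r₂ - x)⁻¹)^2 + ((x - r₁)⁻¹)^2
noncomputable def g2 (r₁ r₂ x : ℝ) : ℝ := 2*((r₂ - x)⁻¹)^3 - 2*((x - r₁)⁻¹)^3
noncomputable def f (r₁ r₂ x : ℝ) : ℝ := (1 + exp (g r₁ r₂ x))⁻¹
noncomputable def f1 (r₁ r₂ x : ℝ) : ℝ :=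
  -(g1 r₁ r₂ x * exp (g r₁ r₂ x) * ((1 + exp (g r₁ r₂ x))⁻¹)^2)
noncomputable def A (r₁ r₂ x : ℝ) : ℝ :=
  (g1 r₁ r₂ x)^2 * (exp (g r₁ r₂ x) - 1) * (1 + exp (g r₁ r₂ x))⁻¹ - g2 r₁ r₂ x
noncomputable def f2 (r₁ r₂ x : ℝ) : ℝ :=
  exp (g r₁ r₂ x) * ((1 + exp (g r₁ r₂ x))⁻¹)^2 * A r₁ r₂ x

variable {r₁ r₂ x : ℝ}

lemma onepE_pos (r₁ r₂ x : ℝ) : 0 < 1 + exp (g r₁ r₂ x) := by positivity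

lemma hasDerivAt_g (h1 : r₂ - x ≠ 0) (h2 : x - r₁ ≠ 0) :
    HasDerivAt (g r₁ r₂) (g1 r₁ r₂ x) x := by
  have d1 : HasDerivAt (fun x => (r₂ - x)⁻¹) (((r₂ - x)⁻¹)^2) x := by
    have := ((hasDerivAt_id x).const_sub r₂).inv h1
    refine this.congr_deriv ?_
    simp only [id]
    field_simp
  have d2 : HasDerivAt (fun x => (x - r₁)⁻¹) (-(((x - r₁)⁻¹)^2)) x := by
    have := ((hasDerivAt_id x).sub_const r₁).inv h2
    refine this.congr_deriv ?_
    simp only [id]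
    field_simp
  exact (d1.sub d2).congr_deriv (by unfold g1; ring)

lemma hasDerivAt_g1 (h1 : r₂ - x ≠ 0) (h2 : x - r₁ ≠ 0) :
    HasDerivAt (g1 r₁ r₂) (g2 r₁ r₂ x) x := by
  have d1 : HasDerivAt (fun x => (r₂ - x)⁻¹) (((r₂ - x)⁻¹)^2) x := by
    have := ((hasDerivAt_id x).const_sub r₂).inv h1
    refine this.congr_deriv ?_
    simp only [id]
    field_simp
  have d2 : HasDerivAt (fun x => (x - r₁)⁻¹) (-(((x - r₁)⁻¹)^2)) x := by
    have := ((hasDerivAt_id x).sub_const r₁).inv h2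
    refine this.congr_deriv ?_
    simp only [id]
    field_simp
  have p1 := d1.pow 2
  have p2 := d2.pow 2
  have : HasDerivAt (g1 r₁ r₂)
      ((2:ℕ) * ((r₂ - x)⁻¹)^(2-1) * ((r₂ - x)⁻¹)^2 +
       (2:ℕ) * ((x - r₁)⁻¹)^(2-1) * (-(((x - r₁)⁻¹)^2))) x := p1.add p2
  convert this using 1
  unfold g2
  push_cast
  ring

lemma hasDerivAt_f (h1 : r₂ - x ≠ 0) (h2 : x - r₁ ≠ 0) :
    HasDerivAt (f r₁ r₂) (f1 r₁ r₂ x) x := by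
  have hE : HasDerivAt (fun x => exp (g r₁ r₂ x)) (exp (g r₁ r₂ x) * g1 r₁ r₂ x) x :=
    (hasDerivAt_g h1 h2).exp
  have := (hE.const_add 1).inv (ne_of_gt (onepE_pos r₁ r₂ x))
  refine this.congr_deriv ?_
  unfold f1
  have := (onepE_pos r₁ r₂ x).ne'
  field_simp

lemma hasDerivAt_f1 (h1 : r₂ - x ≠ 0) (h2 : x - r₁ ≠ 0) :
    HasDerivAt (f1 r₁ r₂) (f2 r₁ r₂ x) x := by
  set E := fun x => exp (g r₁ r₂ x) with hEdef
  have hE : HasDerivAt E (E x * g1 r₁ r₂ x) x := (hasDerivAt_g h1 h2).exp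
  have hinv : HasDerivAt (fun x => (1 + E x)⁻¹)
      (-(E x * g1 r₁ r₂ x) / (1 + E x)^2) x :=
    (hE.const_add 1).inv (ne_of_gt (onepE_pos r₁ r₂ x))
  have hinv2 := hinv.pow 2
  have hprod := (((hasDerivAt_g1 h1 h2).mul hE).mul hinv2).neg
  refine hprod.congr_deriv ?_
  unfold f2 A
  have h1E := (onepE_pos r₁ r₂ x).ne'
  have hEintro : exp (g r₁ r₂ x) = E x := rfl
  rw [hEintro] at h1E ⊢
  simp only [Pi.pow_apply, Pi.mul_apply]
  push_cast
  field_simp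
  ring

end Stmt17

open Stmt17

theorem stmt_17 (r₁ r₂ : ℝ) (hr₁ : 0 < r₁) (hr₁₂ : r₁ < r₂)
    (Φ Ψ η : ℝ → ℝ)
    (hΦ : ∀ ρ ∈ Ioo r₁ r₂, Φ ρ = Real.exp (-(1 / (r₂ - ρ))))
    (hΨ : ∀ ρ ∈ Ioo r₁ r₂, Ψ ρ = Real.exp (-(1 / (ρ - r₁))))
    (hη : ∀ ρ ∈ Ioo r₁ r₂, η ρ = Φ ρ / (Φ ρ + Ψ ρ)) :
    ContDiffOn ℝ (⊤ : ℕ∞) η (Ioo r₁ r₂) ∧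
    (∀ ρ ∈ Ioo r₁ r₂, deriv η ρ < 0) ∧
    Tendsto (fun ρ => η ρ / deriv (deriv η) ρ) (nhdsWithin r₂ (Ioo r₁ r₂)) (nhds 0) ∧
    Tendsto (fun ρ => |deriv η ρ| / deriv (deriv η) ρ) (nhdsWithin r₂ (Ioo r₁ r₂)) (nhds 0) ∧
    (∀ᶠ ρ in nhdsWithin r₂ (Ioo r₁ r₂), 0 < deriv (deriv η) ρ) := by
  have ht0 : ∀ x ∈ Ioo r₁ r₂, (0:ℝ) < r₂ - x := fun x hx => sub_pos.mpr hx.2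
  have hs0 : ∀ x ∈ Ioo r₁ r₂, (0:ℝ) < x - r₁ := fun x hx => sub_pos.mpr hx.1
  have hg1pos : ∀ x ∈ Ioo r₁ r₂, 0 < g1 r₁ r₂ x := by
    intro x hx
    have := ht0 x hx
    have := hs0 x hx
    unfold g1
    positivity
  -- η = f on Ioo
  have heta : ∀ x ∈ Ioo r₁ r₂, η x = f r₁ r₂ x := by
    intro x hx
    rw [hη x hx, hΦ x hx, hΨ x hx]
    have ha : (0:ℝ) < Real.exp (-(1 / (r₂ - x))) := Real.exp_pos _
    have hb : (0:ℝ) < Real.exp (-(1 / (x - r₁))) := Real.exp_pos _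
    have hg : Real.exp (g r₁ r₂ x)
        = Real.exp (-(1 / (x - r₁))) / Real.exp (-(1 / (r₂ - x))) := by
      rw [← Real.exp_sub]
      congr 1
      unfold g
      rw [one_div, one_div]
      ring
    unfold f
    rw [hg]
    have hab : (0:ℝ) < Real.exp (-(1 / (r₂ - x))) + Real.exp (-(1 / (x - r₁))) := by positivity
    field_simp
  -- first derivative
  have hd1 : ∀ x ∈ Ioo r₁ r₂, HasDerivAt η (f1 r₁ r₂ x) x := by
    intro x hx
    refine (hasDerivAt_f (ht0 x hx).ne' (hs0 x hx).ne').congr_of_eventuallyEq ?_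
    exact Filter.eventuallyEq_of_mem (isOpen_Ioo.mem_nhds hx) heta
  have hderiv1 : ∀ x ∈ Ioo r₁ r₂, deriv η x = f1 r₁ r₂ x := fun x hx => (hd1 x hx).deriv
  have hd2 : ∀ x ∈ Ioo r₁ r₂, HasDerivAt (deriv η) (f2 r₁ r₂ x) x := by
    intro x hx
    refine (hasDerivAt_f1 (ht0 x hx).ne' (hs0 x hx).ne').congr_of_eventuallyEq ?_
    exact Filter.eventuallyEq_of_mem (isOpen_Ioo.mem_nhds hx) hderiv1
  have hderiv2 : ∀ x ∈ Ioo r₁ r₂, deriv (deriv η) x = f2 r₁ r₂ x :=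
    fun x hx => (hd2 x hx).deriv
  -- smoothness
  have hcd : ContDiffOn ℝ (⊤ : ℕ∞) η (Ioo r₁ r₂) := by
    have hg_cd : ContDiffOn ℝ (⊤ : ℕ∞) (g r₁ r₂) (Ioo r₁ r₂) := by
      apply ContDiffOn.sub
      · exact ((contDiff_const.sub contDiff_id).contDiffOn).inv
          (fun x hx => (ht0 x hx).ne')
      · exact ((contDiff_id.sub contDiff_const).contDiffOn).inv
          (fun x hx => (hs0 x hx).ne')
    have hf_cd : ContDiffOn ℝ (⊤ : ℕ∞) (f r₁ r₂) (Ioo r₁ r₂) :=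
      (contDiffOn_const.add hg_cd.exp).inv
        (fun x _ => (onepE_pos r₁ r₂ x).ne')
    exact hf_cd.congr heta
  refine ⟨hcd, ?_, ?_⟩
  · -- deriv η < 0
    intro x hx
    rw [hderiv1 x hx]
    unfold f1
    have h1 := hg1pos x hx
    have h2 := Real.exp_pos (g r₁ r₂ x)
    have h3 := onepE_pos r₁ r₂ x
    have : 0 < g1 r₁ r₂ x * Real.exp (g r₁ r₂ x) * ((1 + Real.exp (g r₁ r₂ x))⁻¹)^2 := by
      positivity
    linarith
  · -- limits
    set l := nhdsWithin r₂ (Ioo r₁ r₂) with hl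
    have hmem : ∀ᶠ ρ in l, ρ ∈ Ioo r₁ r₂ := eventually_mem_nhdsWithin
    have htt : Tendsto (fun ρ => r₂ - ρ) l (𝓝[>] 0) := by
      rw [tendsto_nhdsWithin_iff]
      constructor
      · have : Tendsto (fun ρ => r₂ - ρ) (𝓝 r₂) (𝓝 (r₂ - r₂)) :=
          (continuous_const.sub continuous_id).tendsto r₂
        simpa using this.mono_left nhdsWithin_le_nhds
      · exact hmem.mono (fun x hx => ht0 x hx)
    have htt0 : Tendsto (fun ρ => r₂ - ρ) l (𝓝 0) := htt.mono_right nhdsWithin_le_nhds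
    have hss : Tendsto (fun ρ => ρ - r₁) l (𝓝 (r₂ - r₁)) := by
      exact ((continuous_id.sub continuous_const).tendsto r₂).mono_left nhdsWithin_le_nhds
    have htinv : Tendsto (fun ρ => (r₂ - ρ)⁻¹) l atTop := tendsto_inv_nhdsGT_zero.comp htt
    have hLne : (r₂ - r₁) ≠ 0 := (sub_pos.mpr hr₁₂).ne'
    have hsinv : Tendsto (fun ρ => (ρ - r₁)⁻¹) l (𝓝 ((r₂ - r₁)⁻¹)) := hss.inv₀ hLne
    have hgtop : Tendsto (g r₁ r₂) l atTop := by
      have := htinv.atTop_add (hsinv.neg)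
      exact this.congr (fun ρ => by unfold g; ring)
    have hEtop : Tendsto (fun ρ => Real.exp (g r₁ r₂ ρ)) l atTop :=
      Real.tendsto_exp_atTop.comp hgtop
    have hEinv : Tendsto (fun ρ => (Real.exp (g r₁ r₂ ρ))⁻¹) l (𝓝 0) :=
      hEtop.inv_tendsto_atTop
    have h1Etop : Tendsto (fun ρ => 1 + Real.exp (g r₁ r₂ ρ)) l atTop := by
      exact tendsto_const_nhds.add_atTop hEtop
    have h1Einv : Tendsto (fun ρ => (1 + Real.exp (g r₁ r₂ ρ))⁻¹) l (𝓝 0) :=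
      h1Etop.inv_tendsto_atTop
    have hc : Tendsto (fun ρ => (Real.exp (g r₁ r₂ ρ) - 1) * (1 + Real.exp (g r₁ r₂ ρ))⁻¹)
        l (𝓝 1) := by
      have heq : ∀ ρ, (Real.exp (g r₁ r₂ ρ) - 1) * (1 + Real.exp (g r₁ r₂ ρ))⁻¹
          = 1 - 2 * (1 + Real.exp (g r₁ r₂ ρ))⁻¹ := by
        intro ρ
        have := (onepE_pos r₁ r₂ ρ).ne'
        field_simp
        ring
      simp only [heq]
      have h2 : Tendsto (fun ρ => 1 - 2 * (1 + Real.exp (g r₁ r₂ ρ))⁻¹) l (𝓝 (1 - 2*0)) :=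
        (tendsto_const_nhds (x := (1:ℝ))).sub (h1Einv.const_mul 2)
      simpa using h2
    have hg1top : Tendsto (g1 r₁ r₂) l atTop := by
      have h2 : Tendsto (fun ρ => ((r₂ - ρ)⁻¹)^2) l atTop :=
        (tendsto_pow_atTop (two_ne_zero)).comp htinv
      have h3 : Tendsto (fun ρ => ((ρ - r₁)⁻¹)^2) l (𝓝 (((r₂ - r₁)⁻¹)^2)) :=
        hsinv.pow 2
      exact h2.atTop_add h3
    have hg1inv : Tendsto (fun ρ => (g1 r₁ r₂ ρ)⁻¹) l (𝓝 0) := hg1top.inv_tendsto_atTop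
    -- g2/g1² → 0
    have hq : Tendsto (fun ρ => g2 r₁ r₂ ρ / (g1 r₁ r₂ ρ)^2) l (𝓝 0) := by
      have heq : ∀ᶠ ρ in l, g2 r₁ r₂ ρ / (g1 r₁ r₂ ρ)^2
          = (2*(r₂-ρ)*(ρ-r₁)^4 - 2*(r₂-ρ)^4*(ρ-r₁)) / (((ρ-r₁)^2+(r₂-ρ)^2)^2) := by
        refine hmem.mono (fun ρ hρ => ?_)
        have h1 := (ht0 ρ hρ).ne'
        have h2 := (hs0 ρ hρ).ne'
        unfold g2 g1
        rw [div_eq_div_iff (by positivity) (by positivity)]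
        field_simp
      rw [tendsto_congr' heq]
      have hnum : Tendsto (fun ρ => 2*(r₂-ρ)*(ρ-r₁)^4 - 2*(r₂-ρ)^4*(ρ-r₁)) l (𝓝 0) := by
        have := ((htt0.const_mul 2).mul (hss.pow 4)).sub
          (((htt0.pow 4).const_mul 2).mul hss)
        simpa using this
      have hden : Tendsto (fun ρ => ((ρ-r₁)^2+(r₂-ρ)^2)^2) l (𝓝 (((r₂-r₁)^2+0^2)^2)) :=
        ((hss.pow 2).add (htt0.pow 2)).pow 2
      have hdne : (((r₂-r₁)^2+(0:ℝ)^2)^2) ≠ 0 := by positivity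
      have := hnum.div hden hdne
      simpa [Pi.div_def] using this
    -- B → 1
    have hB : Tendsto (fun ρ => (Real.exp (g r₁ r₂ ρ) - 1) * (1 + Real.exp (g r₁ r₂ ρ))⁻¹
        - g2 r₁ r₂ ρ / (g1 r₁ r₂ ρ)^2) l (𝓝 1) := by
      have := hc.sub hq
      simpa using this
    -- A = g1² * B on Ioo
    have hAeq : ∀ x ∈ Ioo r₁ r₂, A r₁ r₂ x = (g1 r₁ r₂ x)^2 *
        ((Real.exp (g r₁ r₂ x) - 1) * (1 + Real.exp (g r₁ r₂ x))⁻¹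
          - g2 r₁ r₂ x / (g1 r₁ r₂ x)^2) := by
      intro x hx
      have h1 := (hg1pos x hx).ne'
      unfold A
      field_simp
    have hAinv : Tendsto (fun ρ => (A r₁ r₂ ρ)⁻¹) l (𝓝 0) := by
      have heq : ∀ᶠ ρ in l, (A r₁ r₂ ρ)⁻¹ = ((g1 r₁ r₂ ρ)⁻¹)^2 *
          ((Real.exp (g r₁ r₂ ρ) - 1) * (1 + Real.exp (g r₁ r₂ ρ))⁻¹
            - g2 r₁ r₂ ρ / (g1 r₁ r₂ ρ)^2)⁻¹ := by
        refine hmem.mono (fun ρ hρ => ?_)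
        rw [hAeq ρ hρ, mul_inv, inv_pow]
      rw [tendsto_congr' heq]
      have := ((hg1inv.pow 2).mul (hB.inv₀ one_ne_zero))
      simpa using this
    have hBpos : ∀ᶠ ρ in l, 0 < (Real.exp (g r₁ r₂ ρ) - 1) * (1 + Real.exp (g r₁ r₂ ρ))⁻¹
        - g2 r₁ r₂ ρ / (g1 r₁ r₂ ρ)^2 := hB.eventually (eventually_gt_nhds zero_lt_one)
    have hApos : ∀ᶠ ρ in l, 0 < A r₁ r₂ ρ := by
      filter_upwards [hmem, hBpos] with ρ hρ hBp
      rw [hAeq ρ hρ]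
      have := hg1pos ρ hρ
      positivity
    have hf2pos : ∀ᶠ ρ in l, 0 < f2 r₁ r₂ ρ := by
      filter_upwards [hApos] with ρ hAp
      unfold f2
      have := Real.exp_pos (g r₁ r₂ ρ)
      have := onepE_pos r₁ r₂ ρ
      positivity
    refine ⟨?_, ?_, ?_⟩
    · -- η / η'' → 0
      have heq : ∀ᶠ ρ in l, η ρ / deriv (deriv η) ρ
          = ((Real.exp (g r₁ r₂ ρ))⁻¹ + 1) * (A r₁ r₂ ρ)⁻¹ := by
        refine hmem.mono (fun ρ hρ => ?_)
        rw [heta ρ hρ, hderiv2 ρ hρ]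
        unfold f f2
        rcases eq_or_ne (A r₁ r₂ ρ) 0 with h | h
        · simp [h]
        · have hE := (Real.exp_pos (g r₁ r₂ ρ)).ne'
          have h1E := (onepE_pos r₁ r₂ ρ).ne'
          field_simp
      rw [tendsto_congr' heq]
      have := (hEinv.add (tendsto_const_nhds (x := (1:ℝ)))).mul hAinv
      simpa using this
    · -- |η'| / η'' → 0
      have heq : ∀ᶠ ρ in l, |deriv η ρ| / deriv (deriv η) ρ
          = (g1 r₁ r₂ ρ)⁻¹ * ((Real.exp (g r₁ r₂ ρ) - 1) * (1 + Real.exp (g r₁ r₂ ρ))⁻¹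
            - g2 r₁ r₂ ρ / (g1 r₁ r₂ ρ)^2)⁻¹ := by
        filter_upwards [hmem, hBpos] with ρ hρ hBp
        rw [hderiv1 ρ hρ, hderiv2 ρ hρ]
        have habs : |f1 r₁ r₂ ρ| = g1 r₁ r₂ ρ * Real.exp (g r₁ r₂ ρ)
            * ((1 + Real.exp (g r₁ r₂ ρ))⁻¹)^2 := by
          unfold f1
          rw [abs_neg, abs_of_nonneg]
          have := hg1pos ρ hρ
          have := Real.exp_pos (g r₁ r₂ ρ)
          have := onepE_pos r₁ r₂ ρ
          positivity
        rw [habs]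
        unfold f2
        rw [hAeq ρ hρ]
        have hg1 := hg1pos ρ hρ
        have hE := Real.exp_pos (g r₁ r₂ ρ)
        have h1E := onepE_pos r₁ r₂ ρ
        have ha : g1 r₁ r₂ ρ * Real.exp (g r₁ r₂ ρ)
            * ((1 + Real.exp (g r₁ r₂ ρ))⁻¹)^2 ≠ 0 := by positivity
        rw [show Real.exp (g r₁ r₂ ρ) * ((1 + Real.exp (g r₁ r₂ ρ))⁻¹)^2 *
            (g1 r₁ r₂ ρ ^ 2 * ((Real.exp (g r₁ r₂ ρ) - 1) * (1 + Real.exp (g r₁ r₂ ρ))⁻¹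
              - g2 r₁ r₂ ρ / (g1 r₁ r₂ ρ)^2)) =
            (g1 r₁ r₂ ρ * Real.exp (g r₁ r₂ ρ) * ((1 + Real.exp (g r₁ r₂ ρ))⁻¹)^2) *
            (g1 r₁ r₂ ρ * ((Real.exp (g r₁ r₂ ρ) - 1) * (1 + Real.exp (g r₁ r₂ ρ))⁻¹
              - g2 r₁ r₂ ρ / (g1 r₁ r₂ ρ)^2)) from by ring,
          div_mul_cancel_left₀ ha, mul_inv]
      rw [tendsto_congr' heq]
      have := hg1inv.mul (hB.inv₀ one_ne_zero)
      simpa using this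
    · -- η'' > 0 eventually
      filter_upwards [hmem, hf2pos] with ρ hρ hp
      rw [hderiv2 ρ hρ]
      exact hp
end
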